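/- arXiv:1211.6141 — 11 statements merged into one kernel-verified Lean document; each statement's English description precedes it below -/
import Mathlib

section
/- Let (α, β) be a Mannheim couple in which the function λ is constant. Then λ·κ(s)·(1 + H(s)²) = 1 for all s ∈ I; equivalently, λ·(κ(s)² + τ(s)²) = κ(s) for all s ∈ I. -/
open Real RealInnerProductSpace

noncomputable section

/-- Euclidean 3-space. -/
abbrev E3 := EuclideanSpace ℝ (Fin 3)

/-- Cross product on `E3 = EuclideanSpace ℝ (Fin 3)`. -/
def cross3 (x y : E3) : E3 :=
  (EuclideanSpace.equiv (Fin 3) ℝ).symm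
    (crossProduct ((EuclideanSpace.equiv (Fin 3) ℝ) x) ((EuclideanSpace.equiv (Fin 3) ℝ) y))

/-- A unit-speed curve `α : I → E³` together with its Frenet apparatus `(T, N, B, κ, τ)`:
`T = α′`, `κ = ‖T′‖ > 0`, `N = T′/κ`, `B = T × N`, and the Frenet equations
`T′ = κN`, `N′ = −κT + τB`, `B′ = −τN` hold on `I`. -/
structure FrenetCurve (I : Set ℝ) where
  α : ℝ → E3
  T : ℝ → E3
  N : ℝ → E3
  B : ℝ → E3
  κ : ℝ → ℝ
  τ : ℝ → ℝ
  smooth_α : ContDiffOn ℝ (⊤ : ℕ∞) α I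
  smooth_T : ContDiffOn ℝ (⊤ : ℕ∞) T I
  smooth_N : ContDiffOn ℝ (⊤ : ℕ∞) N I
  smooth_B : ContDiffOn ℝ (⊤ : ℕ∞) B I
  smooth_κ : ContDiffOn ℝ (⊤ : ℕ∞) κ I
  smooth_τ : ContDiffOn ℝ (⊤ : ℕ∞) τ I
  /-- `T = α′` -/
  deriv_α : ∀ s ∈ I, HasDerivAt α (T s) s
  /-- unit speed -/
  unit_T : ∀ s ∈ I, ‖T s‖ = 1
  /-- `N` is a unit vector (together with `frenet_T` this says `N = T′/κ`) -/
  unit_N : ∀ s ∈ I, ‖N s‖ = 1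
  /-- `κ = ‖T′‖ > 0` -/
  κ_pos : ∀ s ∈ I, 0 < κ s
  /-- Frenet equation `T′ = κ N` -/
  frenet_T : ∀ s ∈ I, HasDerivAt T (κ s • N s) s
  /-- Frenet equation `N′ = −κ T + τ B` -/
  frenet_N : ∀ s ∈ I, HasDerivAt N (-(κ s) • T s + τ s • B s) s
  /-- Frenet equation `B′ = −τ N` -/
  frenet_B : ∀ s ∈ I, HasDerivAt B (-(τ s) • N s) s
  /-- `B = T × N` -/
  B_def : ∀ s ∈ I, B s = cross3 (T s) (N s)

/-- The harmonic curvature function `H = τ/κ` (Abelian case, where `τ_G = 0`). -/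
def FrenetCurve.H {I : Set ℝ} (c : FrenetCurve I) : ℝ → ℝ := fun s => c.τ s / c.κ s

/-- A Mannheim couple `(α, β)`: there are a smooth function `λ = lam : I → ℝ` and a smooth
reparametrization `φ : I → J` with `φ′ = dφ > 0` such that `β (φ s) = α s + lam s • N s` on `I`,
and the principal normal `N` of `α` is parallel to (a scalar multiple of) the binormal `B_β` of
`β` at corresponding points. -/
structure MannheimCouple (I J : Set ℝ) (a : FrenetCurve I) (b : FrenetCurve J) where
  lam : ℝ → ℝ
  φ : ℝ → ℝ
  /-- the derivative of `φ` -/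
  dφ : ℝ → ℝ
  smooth_lam : ContDiffOn ℝ (⊤ : ℕ∞) lam I
  smooth_φ : ContDiffOn ℝ (⊤ : ℕ∞) φ I
  deriv_φ : ∀ s ∈ I, HasDerivAt φ (dφ s) s
  dφ_pos : ∀ s ∈ I, 0 < dφ s
  maps : ∀ s ∈ I, φ s ∈ J
  couple : ∀ s ∈ I, b.α (φ s) = a.α s + lam s • a.N s
  parallel : ∀ s ∈ I, ∃ c : ℝ, a.N s = c • b.B (φ s)


lemma inner_cross3_left (x y : E3) : ⟪x, cross3 x y⟫ = 0 := by
  simp [cross3, PiLp.inner_apply, Fin.sum_univ_three, cross_apply]; ring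

lemma inner_cross3_right (x y : E3) : ⟪y, cross3 x y⟫ = 0 := by
  simp [cross3, PiLp.inner_apply, Fin.sum_univ_three, cross_apply]; ring

lemma inner_cross3_self (x y : E3) :
    ⟪cross3 x y, cross3 x y⟫ = ⟪x,x⟫ * ⟪y,y⟫ - ⟪x,y⟫^2 := by
  simp only [PiLp.inner_apply]
  simp [cross3, PiLp.inner_apply, Fin.sum_univ_three, cross_apply]; ring

/-- For a Mannheim couple `(α, β)` with `λ` constant (equal to `l`),
`l·κ·(1 + H²) = 1` on `I`; equivalently `l·(κ² + τ²) = κ` on `I`. -/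
theorem mannheim_necessary_condition
    (I J : Set ℝ) (hI : IsOpen I) (hIconn : I.OrdConnected)
    (hJ : IsOpen J) (hJconn : J.OrdConnected)
    (a : FrenetCurve I) (b : FrenetCurve J) (M : MannheimCouple I J a b)
    (l : ℝ) (hlam : ∀ s ∈ I, M.lam s = l) :
    ∀ s ∈ I, l * a.κ s * (1 + a.H s ^ 2) = 1 ∧
      l * (a.κ s ^ 2 + a.τ s ^ 2) = a.κ s := by
  -- key orthogonality: N of α is orthogonal to T_β and N_β at corresponding points
  have hNTb : ∀ t ∈ I, ⟪b.T (M.φ t), a.N t⟫ = 0 := by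
    intro t ht
    obtain ⟨c, hc⟩ := M.parallel t ht
    rw [hc, real_inner_smul_right, b.B_def _ (M.maps t ht), inner_cross3_left, mul_zero]
  have hNNb : ∀ t ∈ I, ⟪b.N (M.φ t), a.N t⟫ = 0 := by
    intro t ht
    obtain ⟨c, hc⟩ := M.parallel t ht
    rw [hc, real_inner_smul_right, b.B_def _ (M.maps t ht), inner_cross3_right, mul_zero]
  -- ⟪T, N⟫ = 0 on I
  have hTT : ∀ t ∈ I, ⟪a.T t, a.T t⟫ = 1 := by
    intro t ht
    rw [real_inner_self_eq_norm_sq, a.unit_T t ht]; norm_num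
  have hNN : ∀ t ∈ I, ⟪a.N t, a.N t⟫ = 1 := by
    intro t ht
    rw [real_inner_self_eq_norm_sq, a.unit_N t ht]; norm_num
  have hTN : ∀ t ∈ I, ⟪a.T t, a.N t⟫ = 0 := by
    intro t ht
    have h1 : HasDerivAt (fun u => ⟪a.T u, a.T u⟫)
        (⟪a.T t, a.κ t • a.N t⟫ + ⟪a.κ t • a.N t, a.T t⟫) t :=
      (a.frenet_T t ht).inner ℝ (a.frenet_T t ht)
    have h2 : HasDerivAt (fun u => ⟪a.T u, a.T u⟫) 0 t := by
      have heq : (fun u => ⟪a.T u, a.T u⟫) =ᶠ[nhds t] fun _ => (1:ℝ) := by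
        filter_upwards [hI.mem_nhds ht] with u hu
        exact hTT u hu
      exact (hasDerivAt_const t (1:ℝ)).congr_of_eventuallyEq heq
    have h3 := h1.unique h2
    rw [real_inner_smul_right, real_inner_smul_left, real_inner_comm (a.N t) (a.T t)] at h3
    have hκ := a.κ_pos t ht
    rw [real_inner_comm]
    nlinarith [h3]
  have hTB : ∀ t ∈ I, ⟪a.T t, a.B t⟫ = 0 := by
    intro t ht
    rw [a.B_def t ht]; exact inner_cross3_left _ _
  have hBB : ∀ t ∈ I, ⟪a.B t, a.B t⟫ = 1 := by
    intro t ht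
    rw [a.B_def t ht, inner_cross3_self, hTT t ht, hNN t ht, hTN t ht]
    norm_num
  intro s hs
  have hφs := M.maps s hs
  -- derivative of t ↦ ⟪T_β(φ t), N t⟫, which is identically 0 near s
  have hf1 : HasDerivAt (fun t => ⟪b.T (M.φ t), a.N t⟫)
      (⟪b.T (M.φ s), -(a.κ s) • a.T s + a.τ s • a.B s⟫ +
        ⟪M.dφ s • (b.κ (M.φ s) • b.N (M.φ s)), a.N s⟫) s := by
    have hchain : HasDerivAt (fun t => b.T (M.φ t))
        (M.dφ s • (b.κ (M.φ s) • b.N (M.φ s))) s :=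
      (b.frenet_T _ hφs).scomp s (M.deriv_φ s hs)
    exact hchain.inner ℝ (a.frenet_N s hs)
  have hf2 : HasDerivAt (fun t => ⟪b.T (M.φ t), a.N t⟫) 0 s := by
    have heq : (fun t => ⟪b.T (M.φ t), a.N t⟫) =ᶠ[nhds s] fun _ => (0:ℝ) := by
      filter_upwards [hI.mem_nhds hs] with u hu
      exact hNTb u hu
    exact (hasDerivAt_const s (0:ℝ)).congr_of_eventuallyEq heq
  have hkey : ⟪b.T (M.φ s), -(a.κ s) • a.T s + a.τ s • a.B s⟫ = 0 := by
    have h3 := hf1.unique hf2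
    rw [real_inner_smul_left, real_inner_smul_left, hNNb s hs] at h3
    linarith [h3]
  -- differentiate the Mannheim relation with λ constant
  have hder : M.dφ s • b.T (M.φ s)
      = a.T s + l • (-(a.κ s) • a.T s + a.τ s • a.B s) := by
    have h1 : HasDerivAt (fun t => b.α (M.φ t)) (M.dφ s • b.T (M.φ s)) s :=
      (b.deriv_α _ hφs).scomp s (M.deriv_φ s hs)
    have h2 : HasDerivAt (fun t => a.α t + l • a.N t)
        (a.T s + l • (-(a.κ s) • a.T s + a.τ s • a.B s)) s :=
      (a.deriv_α s hs).add ((a.frenet_N s hs).const_smul l)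
    have heq : (fun t => b.α (M.φ t)) =ᶠ[nhds s] (fun t => a.α t + l • a.N t) := by
      filter_upwards [hI.mem_nhds hs] with u hu
      rw [M.couple u hu, hlam u hu]
    exact h1.unique (h2.congr_of_eventuallyEq heq)
  -- compute the inner product
  have hmain : a.κ s = l * (a.κ s ^ 2 + a.τ s ^ 2) := by
    have e1 : ⟪M.dφ s • b.T (M.φ s), -(a.κ s) • a.T s + a.τ s • a.B s⟫ = 0 := by
      rw [real_inner_smul_left, hkey, mul_zero]
    rw [hder] at e1
    simp only [inner_add_left, inner_add_right, real_inner_smul_left, real_inner_smul_right,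
      inner_neg_left, inner_neg_right] at e1
    have hc : ⟪a.B s, a.T s⟫ = 0 := by rw [real_inner_comm]; exact hTB s hs
    simp only [hTT s hs, hTB s hs, hBB s hs, hc] at e1
    nlinarith [e1]
  have hκ := a.κ_pos s hs
  constructor
  · rw [FrenetCurve.H]
    field_simp
    nlinarith [hmain, hκ]
  · linarith [hmain]
end
end

section
/- Let α : I → E³ be a unit-speed curve with Frenet apparatus (T, N, B, κ, τ), and let λ be a nonzero real constant such that λ·(κ(s)² + τ(s)²) = κ(s) for all s ∈ I (equivalently λκ(1 + H²) = 1). Define β := α + λ·N : I → E³. Then for every s ∈ I one has ⟨β′(s), N(s)⟩ = 0 and ⟨β″(s), N(s)⟩ = 0; that is, N(s) is orthogonal to the osculating plane span{β′(s), β″(s)} of β, so the principal normal of α is parallel to the binormal of β and α is a Mannheim curve with Mannheim partner β. -/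
open Real RealInnerProductSpace

noncomputable section

/-- If `λ ≠ 0` is a constant with `λ·(κ² + τ²) = κ` on `I`, then for
`β := α + λ·N` the normal `N s` is orthogonal to `β′ s` and `β″ s`, hence to the whole
osculating plane `span {β′ s, β″ s}` of `β`; so the principal normal of `α` is parallel to the
binormal of `β` and `α` is a Mannheim curve with Mannheim partner `β`. -/
theorem mannheim_sufficient_condition
    (I : Set ℝ) (hI : IsOpen I) (a : FrenetCurve I)
    (l : ℝ) (hl : l ≠ 0)
    (hrel : ∀ s ∈ I, l * (a.κ s ^ 2 + a.τ s ^ 2) = a.κ s)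
    (β : ℝ → E3) (hβ : β = fun s => a.α s + l • a.N s) :
    ∀ s ∈ I, ⟪deriv β s, a.N s⟫ = 0 ∧ ⟪deriv (deriv β) s, a.N s⟫ = 0 ∧
      ∀ v ∈ Submodule.span ℝ ({deriv β s, deriv (deriv β) s} : Set E3), ⟪v, a.N s⟫ = 0 := by

  intro s hs
  have hsn : I ∈ nhds s := hI.mem_nhds hs
  -- T ⟂ N
  have hTN : ⟪a.T s, a.N s⟫ = 0 := by
    have h1 : HasDerivAt (fun t => (⟪a.T t, a.T t⟫ : ℝ))
        (⟪a.T s, a.κ s • a.N s⟫ + ⟪a.κ s • a.N s, a.T s⟫) s :=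
      (a.frenet_T s hs).inner ℝ (a.frenet_T s hs)
    have h2 : HasDerivAt (fun t => (⟪a.T t, a.T t⟫ : ℝ)) 0 s := by
      refine (hasDerivAt_const s (1:ℝ)).congr_of_eventuallyEq ?_
      filter_upwards [hsn] with t ht
      rw [real_inner_self_eq_norm_sq, a.unit_T t ht]; norm_num
    have h3 := h1.unique h2
    rw [real_inner_smul_left, real_inner_smul_right, real_inner_comm (a.N s)] at h3
    have hκ := a.κ_pos s hs
    rw [real_inner_comm]
    nlinarith [h3]
  -- B ⟂ N
  have hBN : ⟪a.B s, a.N s⟫ = 0 := by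
    rw [a.B_def s hs]
    simp [cross3, crossProduct, PiLp.inner_apply, Fin.sum_univ_three]
    ring
  have hNN : (⟪a.N s, a.N s⟫ : ℝ) = 1 := by
    rw [real_inner_self_eq_norm_sq, a.unit_N s hs]; norm_num
  -- β′
  have key : ∀ t ∈ I, HasDerivAt β ((1 - l * a.κ t) • a.T t + (l * a.τ t) • a.B t) t := by
    intro t ht
    have h := (a.deriv_α t ht).add ((a.frenet_N t ht).const_smul l)
    rw [hβ]
    exact h.congr_deriv (by module)
  have hβ1 := (key s hs).deriv
  -- β″ : deriv β agrees with g near s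
  set g : ℝ → E3 := fun t => (1 - l * a.κ t) • a.T t + (l * a.τ t) • a.B t with hg
  have heq : deriv β =ᶠ[nhds s] g := by
    filter_upwards [hsn] with t ht
    exact (key t ht).deriv
  have hκd : HasDerivAt a.κ (deriv a.κ s) s :=
    ((a.smooth_κ.contDiffAt hsn).differentiableAt (by simp)).hasDerivAt
  have hτd : HasDerivAt a.τ (deriv a.τ s) s :=
    ((a.smooth_τ.contDiffAt hsn).differentiableAt (by simp)).hasDerivAt
  have hgd : HasDerivAt g
      (((1 - l * a.κ s) • (a.κ s • a.N s) + (-(l * deriv a.κ s)) • a.T s)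
        + ((l * a.τ s) • (-(a.τ s) • a.N s) + (l * deriv a.τ s) • a.B s)) s := by
    have h1 : HasDerivAt (fun t => 1 - l * a.κ t) (-(l * deriv a.κ s)) s := by
      simpa using ((hκd.const_mul l).const_sub 1)
    have h2 : HasDerivAt (fun t => l * a.τ t) (l * deriv a.τ s) s := hτd.const_mul l
    exact (h1.smul (a.frenet_T s hs)).add (h2.smul (a.frenet_B s hs))
  have hβ2 : deriv (deriv β) s =
      ((1 - l * a.κ s) • (a.κ s • a.N s) + (-(l * deriv a.κ s)) • a.T s)
        + ((l * a.τ s) • (-(a.τ s) • a.N s) + (l * deriv a.τ s) • a.B s) :=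
    (hgd.congr_of_eventuallyEq heq).deriv
  have hrel' := hrel s hs
  have hfst : ⟪deriv β s, a.N s⟫ = 0 := by
    rw [hβ1, inner_add_left, real_inner_smul_left, real_inner_smul_left, hTN, hBN]
    ring
  have hsnd : ⟪deriv (deriv β) s, a.N s⟫ = 0 := by
    rw [hβ2]
    simp only [inner_add_left, real_inner_smul_left, hTN, hBN, hNN]
    nlinarith [hrel']
  refine ⟨hfst, hsnd, ?_⟩
  intro v hv
  induction hv using Submodule.span_induction with
  | mem x hx =>
    rcases hx with h | h
    · rw [h]; exact hfst
    · rw [Set.mem_singleton_iff] at h; rw [h]; exact hsnd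
  | zero => simp
  | add x y _ _ hx hy => rw [inner_add_left, hx, hy]; ring
  | smul c x _ hx => rw [real_inner_smul_left, hx]; ring
end
end

section
/- Let μ be a nonzero real constant, set α̃ := β + μ·B_β : J → E³, and assume τ_β(s̄) ≠ 0 for all s̄ ∈ J. If for every s̄ ∈ J the vector B_β(s̄) lies in span{α̃′(s̄), α̃″(s̄)} (together with the automatic relation ⟨α̃′, B_β⟩ = 0, this says the principal normal of α̃ is parallel to B_β, i.e. β is the Mannheim partner curve of α̃), then μ·τ_β′(s̄) = κ_β(s̄)·(1 + μ²·τ_β(s̄)²) for all s̄ ∈ J, i.e. d(κ_βH_β)/ds̄ = (κ_β/μ)·(1 + μ²κ_β²H_β²). -/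
open Real RealInnerProductSpace

noncomputable section

lemma eq3_apply (x : E3) (i : Fin 3) : (EuclideanSpace.equiv (Fin 3) ℝ) x i = x i := rfl
lemma eq3_symm_apply (v : Fin 3 → ℝ) (i : Fin 3) :
    ((EuclideanSpace.equiv (Fin 3) ℝ).symm v) i = v i := rfl

lemma inner_cross3_cross3 (x y : E3) :
    ⟪cross3 x y, cross3 x y⟫ = ⟪x,x⟫ * ⟪y,y⟫ - ⟪x,y⟫ * ⟪x,y⟫ := by
  have := cross_dot_cross (R := ℝ) ((EuclideanSpace.equiv (Fin 3) ℝ) x) ((EuclideanSpace.equiv (Fin 3) ℝ) y) ((EuclideanSpace.equiv (Fin 3) ℝ) x) ((EuclideanSpace.equiv (Fin 3) ℝ) y)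
  simp only [dotProduct, Fin.sum_univ_three, eq3_apply] at this
  simp only [cross3, PiLp.inner_apply, RCLike.inner_apply, conj_trivial, Fin.sum_univ_three,
    eq3_symm_apply]
  linear_combination this


/-- Let `μ ≠ 0` be constant, `α̃ := β + μ·B_β`, and `τ_β ≠ 0` on `J`. If `B_β s`
lies in `span {α̃′ s, α̃″ s}` for every `s ∈ J` (i.e. the principal normal of `α̃` is parallel
to `B_β`, so `β` is the Mannheim partner of `α̃`), then `μ·τ_β′ = κ_β·(1 + μ²·τ_β²)` on `J`,
i.e. `d(κ_β H_β)/ds̄ = (κ_β/μ)(1 + μ²κ_β²H_β²)`. -/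
theorem mannheim_partner_necessary_condition
    (J : Set ℝ) (hJ : IsOpen J) (b : FrenetCurve J)
    (μ : ℝ) (hμ : μ ≠ 0) (hτ : ∀ s ∈ J, b.τ s ≠ 0)
    (αtld : ℝ → E3) (hαtld : αtld = fun s => b.α s + μ • b.B s)
    (hspan : ∀ s ∈ J,
      b.B s ∈ Submodule.span ℝ ({deriv αtld s, deriv (deriv αtld) s} : Set E3)) :
    ∀ s ∈ J, μ * deriv b.τ s = b.κ s * (1 + μ ^ 2 * b.τ s ^ 2) := by
  intro s hs
  have hmem : J ∈ nhds s := hJ.mem_nhds hs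
  -- τ is differentiable at s
  have hτd : HasDerivAt b.τ (deriv b.τ s) s :=
    (((b.smooth_τ.contDiffAt hmem).differentiableAt (by simp))).hasDerivAt
  -- first derivative of αtld
  have hd1 : ∀ t ∈ J, HasDerivAt αtld (b.T t - (μ * b.τ t) • b.N t) t := by
    intro t ht
    have h := (b.deriv_α t ht).add ((b.frenet_B t ht).const_smul μ)
    rw [hαtld]
    exact h.congr_deriv (by module)
  have hder1eq : ∀ t ∈ J, deriv αtld t = b.T t - (μ * b.τ t) • b.N t :=
    fun t ht => (hd1 t ht).deriv
  -- second derivative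
  have hg : HasDerivAt (fun t => b.T t - (μ * b.τ t) • b.N t)
      ((μ * b.κ s * b.τ s) • b.T s + (b.κ s - μ * deriv b.τ s) • b.N s
        - (μ * b.τ s ^ 2) • b.B s) s := by
    have hτs : HasDerivAt (fun t => μ * b.τ t) (μ * deriv b.τ s) s := hτd.const_mul μ
    have h := (b.frenet_T s hs).sub (hτs.smul (b.frenet_N s hs))
    exact h.congr_deriv (by module)
  have h2 : HasDerivAt (deriv αtld)
      ((μ * b.κ s * b.τ s) • b.T s + (b.κ s - μ * deriv b.τ s) • b.N s
        - (μ * b.τ s ^ 2) • b.B s) s :=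
    hg.congr_of_eventuallyEq (Filter.eventuallyEq_of_mem hmem hder1eq)
  -- orthonormality
  have hTT : ⟪b.T s, b.T s⟫ = 1 := by
    rw [real_inner_self_eq_norm_mul_norm, b.unit_T s hs]; norm_num
  have hNN : ⟪b.N s, b.N s⟫ = 1 := by
    rw [real_inner_self_eq_norm_mul_norm, b.unit_N s hs]; norm_num
  have hTB : ⟪b.T s, b.B s⟫ = 0 := by
    rw [b.B_def s hs]; exact inner_cross3_left _ _
  have hNB : ⟪b.N s, b.B s⟫ = 0 := by
    rw [b.B_def s hs]; exact inner_cross3_right _ _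
  have hTN : ⟪b.T s, b.N s⟫ = 0 := by
    have hconst : (fun t => ⟪b.T t, b.T t⟫) =ᶠ[nhds s] fun _ => (1 : ℝ) :=
      Filter.eventuallyEq_of_mem hmem (fun t ht => by
        rw [real_inner_self_eq_norm_mul_norm, b.unit_T t ht]; norm_num)
    have h0 : HasDerivAt (fun t => ⟪b.T t, b.T t⟫) 0 s :=
      (hasDerivAt_const s (1 : ℝ)).congr_of_eventuallyEq hconst
    have h1 : HasDerivAt (fun t => ⟪b.T t, b.T t⟫)
        (⟪b.T s, b.κ s • b.N s⟫ + ⟪b.κ s • b.N s, b.T s⟫) s :=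
      (b.frenet_T s hs).inner ℝ (b.frenet_T s hs)
    have hu := h0.unique h1
    have e1 : ⟪b.κ s • b.N s, b.T s⟫ = b.κ s * ⟪b.T s, b.N s⟫ := by
      rw [real_inner_smul_left, real_inner_comm]
    have e2 : ⟪b.T s, b.κ s • b.N s⟫ = b.κ s * ⟪b.T s, b.N s⟫ :=
      real_inner_smul_right _ _ _
    rw [e1, e2] at hu
    have hκ : b.κ s ≠ 0 := (b.κ_pos s hs).ne'
    have : b.κ s * ⟪b.T s, b.N s⟫ = 0 := by linarith
    exact (mul_eq_zero.1 this).resolve_left hκ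
  have hBB : ⟪b.B s, b.B s⟫ = 1 := by
    rw [b.B_def s hs, inner_cross3_cross3, hTT, hNN, hTN]; ring
  have hBT : ⟪b.B s, b.T s⟫ = 0 := by rw [real_inner_comm]; exact hTB
  have hBN : ⟪b.B s, b.N s⟫ = 0 := by rw [real_inner_comm]; exact hNB
  have hNT : ⟪b.N s, b.T s⟫ = 0 := by rw [real_inner_comm]; exact hTN
  -- span hypothesis
  obtain ⟨a, c, hac⟩ := Submodule.mem_span_pair.1 (hspan s hs)
  rw [hder1eq s hs, h2.deriv] at hac
  have eqT := congrArg (fun v => ⟪b.T s, v⟫) hac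
  have eqN := congrArg (fun v => ⟪b.N s, v⟫) hac
  have eqB := congrArg (fun v => ⟪b.B s, v⟫) hac
  simp only [inner_add_right, inner_sub_right, real_inner_smul_right,
    hTT, hNN, hBB, hTN, hTB, hNB, hBT, hBN, hNT] at eqT eqN eqB
  have hc : c ≠ 0 := by
    intro h
    rw [h] at eqB
    norm_num at eqB
  have key : c * (b.κ s * (1 + μ ^ 2 * b.τ s ^ 2) - μ * deriv b.τ s) = 0 := by
    linear_combination eqN + (μ * b.τ s) * eqT
  rcases mul_eq_zero.1 key with h | h
  · exact absurd h hc
  · linarith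
end
end

section
/- Let μ be a nonzero real constant and assume τ_β(s̄) ≠ 0 and μ·τ_β′(s̄) = κ_β(s̄)·(1 + μ²·τ_β(s̄)²) for all s̄ ∈ J. Define α̃ := β + μ·B_β : J → E³. Then for every s̄ ∈ J one has ⟨α̃′(s̄), B_β(s̄)⟩ = 0 and B_β(s̄) ∈ span{α̃′(s̄), α̃″(s̄)}; that is, the principal normal of the curve α̃ is parallel to the binormal B_β of β, so α̃ is a Mannheim curve whose Mannheim partner curve is β. -/
open Real RealInnerProductSpace

noncomputable section

/-- Conversely, if `μ ≠ 0` is constant, `τ_β ≠ 0` and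
`μ·τ_β′ = κ_β·(1 + μ²·τ_β²)` on `J`, then for `α̃ := β + μ·B_β` one has `⟪α̃′, B_β⟫ = 0` and
`B_β s ∈ span {α̃′ s, α̃″ s}` for all `s ∈ J`; that is, the principal normal of `α̃` is parallel
to `B_β`, so `α̃` is a Mannheim curve with Mannheim partner `β`. -/
theorem mannheim_partner_sufficient_condition
    (J : Set ℝ) (hJ : IsOpen J) (b : FrenetCurve J)
    (μ : ℝ) (hμ : μ ≠ 0) (hτ : ∀ s ∈ J, b.τ s ≠ 0)
    (hode : ∀ s ∈ J, μ * deriv b.τ s = b.κ s * (1 + μ ^ 2 * b.τ s ^ 2))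
    (αtld : ℝ → E3) (hαtld : αtld = fun s => b.α s + μ • b.B s) :
    ∀ s ∈ J, ⟪deriv αtld s, b.B s⟫ = 0 ∧
      b.B s ∈ Submodule.span ℝ ({deriv αtld s, deriv (deriv αtld) s} : Set E3) := by
  -- first derivative
  have hd1 : ∀ s ∈ J, HasDerivAt αtld (b.T s - (μ * b.τ s) • b.N s) s := by
    intro s hs
    rw [hαtld]
    have h := (b.deriv_α s hs).add ((b.frenet_B s hs).const_smul μ)
    exact h.congr_deriv (by module)
  have hderiv1 : ∀ s ∈ J, deriv αtld s = b.T s - (μ * b.τ s) • b.N s :=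
    fun s hs => (hd1 s hs).deriv
  -- τ has a derivative
  have hτd : ∀ s ∈ J, HasDerivAt b.τ (deriv b.τ s) s := by
    intro s hs
    have : DifferentiableAt ℝ b.τ s :=
      ((b.smooth_τ.contDiffAt (hJ.mem_nhds hs)).differentiableAt (by simp))
    exact this.hasDerivAt
  -- second derivative
  have hd2 : ∀ s ∈ J, HasDerivAt (fun s => b.T s - (μ * b.τ s) • b.N s)
      ((μ * b.τ s * b.κ s) • b.T s + (b.κ s - μ * deriv b.τ s) • b.N s
        - (μ * b.τ s * b.τ s) • b.B s) s := by
    intro s hs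
    have hc : HasDerivAt (fun s => μ * b.τ s) (μ * deriv b.τ s) s :=
      (hτd s hs).const_mul μ
    have h := (b.frenet_T s hs).sub (hc.smul (b.frenet_N s hs))
    exact h.congr_deriv (by module)
  have hderiv2 : ∀ s ∈ J, deriv (deriv αtld) s
      = (μ * b.τ s * b.κ s) • b.T s + (b.κ s - μ * deriv b.τ s) • b.N s
        - (μ * b.τ s * b.τ s) • b.B s := by
    intro s hs
    have heq : deriv αtld =ᶠ[nhds s] (fun s => b.T s - (μ * b.τ s) • b.N s) := by
      filter_upwards [hJ.mem_nhds hs] with t ht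
      exact hderiv1 t ht
    rw [heq.deriv_eq]
    exact (hd2 s hs).deriv
  intro s hs
  have hTB : ⟪b.T s, b.B s⟫ = 0 := by rw [b.B_def s hs]; exact inner_cross3_left _ _
  have hNB : ⟪b.N s, b.B s⟫ = 0 := by rw [b.B_def s hs]; exact inner_cross3_right _ _
  constructor
  · rw [hderiv1 s hs, inner_sub_left, real_inner_smul_left, hTB, hNB]
    ring
  · -- B = (κ/τ) • α̃′ + (-1/(μτ²)) • α̃″
    have hτs := hτ s hs
    have hκτ : b.κ s - μ * deriv b.τ s = -(b.κ s * μ ^ 2 * b.τ s ^ 2) := by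
      have := hode s hs; nlinarith [this]
    have key : b.B s = (b.κ s / b.τ s) • deriv αtld s
        + (-(1 / (μ * b.τ s ^ 2))) • deriv (deriv αtld) s := by
      rw [hderiv1 s hs, hderiv2 s hs, hκτ]
      match_scalars
      · field_simp
      · field_simp; ring
      · field_simp; ring
    rw [key]
    exact Submodule.add_mem _
      (Submodule.smul_mem _ _ (Submodule.subset_span (Set.mem_insert _ _)))
      (Submodule.smul_mem _ _ (Submodule.subset_span (Set.mem_insert_of_mem _ rfl)))
end
end

section
/- Let (α, β) be a Mannheim couple in which λ is constant, λ·κ(s)·(1 + H(s)²) = 1 on I, H(s) > 0 on I, and B_β(φ(s)) = N(s) for all s ∈ I. Then the curvature and torsion of the Mannheim partner β are given at corresponding points by κ_β(φ(s)) = |H′(s)| / (λ·κ(s)·H(s)·(1 + H(s)²)^{3/2}) and τ_β(φ(s)) = 1/(λ·H(s)) for all s ∈ I (in the Abelian case τ_{G_β} = 0). -/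
open Real RealInnerProductSpace

noncomputable section

section Helpers

lemma inner_eq_dot (x y : E3) : ⟪x, y⟫ =
    dotProduct ((EuclideanSpace.equiv (Fin 3) ℝ) x) ((EuclideanSpace.equiv (Fin 3) ℝ) y) := by
  simp [PiLp.inner_apply, dotProduct, RCLike.inner_apply, mul_comm]

lemma cross3_triple (u v w : E3) : cross3 (cross3 u v) w = ⟪u,w⟫ • v - ⟪v,w⟫ • u := by
  apply (EuclideanSpace.equiv (Fin 3) ℝ).injective
  ext i
  fin_cases i <;>
    simp [cross3, crossProduct, inner_eq_dot, dotProduct, Fin.sum_univ_succ] <;> ring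

lemma cross3_anticomm (u v : E3) : cross3 u v = - cross3 v u := by
  unfold cross3; rw [← map_neg, cross_anticomm]

lemma inner_cross3_left_s8 (u v : E3) : ⟪cross3 u v, u⟫ = 0 := by
  rw [cross3, inner_eq_dot, (EuclideanSpace.equiv (Fin 3) ℝ).apply_symm_apply,
    dotProduct_comm]
  exact dot_self_cross _ _

lemma inner_cross3_right_s8 (u v : E3) : ⟪cross3 u v, v⟫ = 0 := by
  rw [cross3_anticomm, inner_neg_left, inner_cross3_left_s8, neg_zero]

lemma cross3_smul_right (c : ℝ) (u v : E3) : cross3 u (c • v) = c • cross3 u v := by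
  unfold cross3; rw [← map_smul]; congr 1; rw [map_smul, map_smul]

lemma cross3_add_right (u v w : E3) : cross3 u (v + w) = cross3 u v + cross3 u w := by
  unfold cross3; rw [← map_add]; congr 1; rw [map_add, map_add]

lemma norm_cross3 (u v : E3) (hu : ‖u‖ = 1) (hv : ‖v‖ = 1) (huv : ⟪u,v⟫ = 0) :
    ‖cross3 u v‖ = 1 := by
  have h : ⟪cross3 u v, cross3 u v⟫ = 1 := by
    rw [cross3, inner_eq_dot, (EuclideanSpace.equiv (Fin 3) ℝ).apply_symm_apply, cross_dot_cross]
    have hu2 := real_inner_self_eq_norm_sq u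
    have hv2 := real_inner_self_eq_norm_sq v
    rw [inner_eq_dot] at hu2 hv2 huv
    rw [hu2, hv2, hu, hv, huv]; ring
  have h2 := real_inner_self_eq_norm_sq (cross3 u v)
  nlinarith [norm_nonneg (cross3 u v)]

lemma norm_combo (c d : ℝ) (x y : E3) (hx : ‖x‖ = 1) (hy : ‖y‖ = 1) (hxy : ⟪x,y⟫ = 0) :
    ‖c • x + d • y‖ = Real.sqrt (c ^ 2 + d ^ 2) := by
  have h : ⟪c • x + d • y, c • x + d • y⟫ = c ^ 2 + d ^ 2 := by
    have hx2 := real_inner_self_eq_norm_sq x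
    have hy2 := real_inner_self_eq_norm_sq y
    have hyx : ⟪y, x⟫ = 0 := by rw [real_inner_comm]; exact hxy
    simp only [inner_add_left, inner_add_right, real_inner_smul_left, real_inner_smul_right,
      hx2, hy2, hx, hy, hxy, hyx]
    ring
  rw [norm_eq_sqrt_real_inner, h]

namespace FrenetCurve
variable {I : Set ℝ} (c : FrenetCurve I) {s : ℝ}

lemma inner_TT (hs : s ∈ I) : ⟪c.T s, c.T s⟫ = 1 := by
  rw [real_inner_self_eq_norm_sq, c.unit_T s hs]; norm_num

lemma inner_NN (hs : s ∈ I) : ⟪c.N s, c.N s⟫ = 1 := by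
  rw [real_inner_self_eq_norm_sq, c.unit_N s hs]; norm_num

lemma inner_TN (hI : IsOpen I) (hs : s ∈ I) : ⟪c.T s, c.N s⟫ = 0 := by
  have hd : HasDerivAt (fun u => (⟪c.T u, c.T u⟫ : ℝ))
      (⟪c.T s, c.κ s • c.N s⟫ + ⟪c.κ s • c.N s, c.T s⟫) s :=
    (c.frenet_T s hs).inner ℝ (c.frenet_T s hs)
  have hconst : (fun u => (⟪c.T u, c.T u⟫ : ℝ)) =ᶠ[nhds s] fun _ => 1 := by
    filter_upwards [hI.mem_nhds hs] with u hu
    rw [real_inner_self_eq_norm_sq, c.unit_T u hu]; norm_num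
  have h0 : HasDerivAt (fun u => (⟪c.T u, c.T u⟫ : ℝ)) 0 s :=
    (hasDerivAt_const s (1:ℝ)).congr_of_eventuallyEq hconst
  have huniq := hd.unique h0
  rw [real_inner_smul_left, real_inner_smul_right, real_inner_comm (c.N s)] at huniq
  have hκ := c.κ_pos s hs
  have hcomm := real_inner_comm (c.T s) (c.N s)
  nlinarith [huniq]

lemma norm_B (hI : IsOpen I) (hs : s ∈ I) : ‖c.B s‖ = 1 := by
  rw [c.B_def s hs]
  exact norm_cross3 _ _ (c.unit_T s hs) (c.unit_N s hs) (c.inner_TN hI hs)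

lemma inner_TB (hs : s ∈ I) : ⟪c.T s, c.B s⟫ = 0 := by
  rw [c.B_def s hs, real_inner_comm]; exact inner_cross3_left_s8 _ _

lemma inner_NB (hs : s ∈ I) : ⟪c.N s, c.B s⟫ = 0 := by
  rw [c.B_def s hs, real_inner_comm]; exact inner_cross3_right_s8 _ _

lemma cross_NT (hs : s ∈ I) : cross3 (c.N s) (c.T s) = - c.B s := by
  rw [c.B_def s hs, ← cross3_anticomm]

lemma cross_NB (hI : IsOpen I) (hs : s ∈ I) : cross3 (c.N s) (c.B s) = c.T s := by
  rw [c.B_def s hs, cross3_anticomm, cross3_triple, c.inner_TN hI hs, c.inner_NN hs]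
  simp

end FrenetCurve

end Helpers

/-- For a Mannheim couple with constant `λ = l`, `l·κ·(1 + H²) = 1`, `H > 0` on
`I`, and `B_β (φ s) = N s`, the curvature and torsion of the Mannheim partner `β` at
corresponding points are `κ_β (φ s) = |H′| / (l·κ·H·(1 + H²)^{3/2})` and
`τ_β (φ s) = 1/(l·H)` (Abelian case: `τ_{G_β} = 0`). -/
theorem mannheim_partner_curvature_torsion
    (I J : Set ℝ) (hI : IsOpen I) (hJ : IsOpen J)
    (a : FrenetCurve I) (b : FrenetCurve J) (M : MannheimCouple I J a b)
    (l : ℝ) (hlam : ∀ s ∈ I, M.lam s = l)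
    (hrel : ∀ s ∈ I, l * a.κ s * (1 + a.H s ^ 2) = 1)
    (hH : ∀ s ∈ I, 0 < a.H s)
    (hB : ∀ s ∈ I, b.B (M.φ s) = a.N s) :
    ∀ s ∈ I,
      b.κ (M.φ s) = |deriv a.H s| / (l * a.κ s * a.H s * Real.sqrt (1 + a.H s ^ 2) ^ 3) ∧
      b.τ (M.φ s) = 1 / (l * a.H s) := by
  have hq : ∀ u ∈ I, (0:ℝ) < 1 + a.H u ^ 2 := fun u _ => by positivity
  have hsq : ∀ u ∈ I, (0:ℝ) < Real.sqrt (1 + a.H u ^ 2) :=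
    fun u hu => Real.sqrt_pos.2 (hq u hu)
  have hl : ∀ u ∈ I, 0 < l := fun u hu => by nlinarith [hrel u hu, mul_pos (a.κ_pos u hu) (hq u hu)]
  have hτ : ∀ u ∈ I, a.τ u = a.κ u * a.H u := by
    intro u hu
    have h := (a.κ_pos u hu).ne'
    unfold FrenetCurve.H
    field_simp
  have hlκH : ∀ u ∈ I, 0 < l * a.κ u * a.H u :=
    fun u hu => mul_pos (mul_pos (hl u hu) (a.κ_pos u hu)) (hH u hu)
  -- Step 1: differentiate the coupling relation
  have hE1 : ∀ u ∈ I, M.dφ u • b.T (M.φ u)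
      = (l * a.κ u * a.H u) • (a.H u • a.T u + a.B u) := by
    intro u hu
    have h1 : HasDerivAt (fun x => b.α (M.φ x)) (M.dφ u • b.T (M.φ u)) u :=
      (b.deriv_α _ (M.maps u hu)).scomp u (M.deriv_φ u hu)
    have h2 : HasDerivAt (fun x => a.α x + l • a.N x)
        (a.T u + l • (-(a.κ u) • a.T u + a.τ u • a.B u)) u :=
      (a.deriv_α u hu).add ((a.frenet_N u hu).const_smul l)
    have heq : (fun x => b.α (M.φ x)) =ᶠ[nhds u] (fun x => a.α x + l • a.N x) := by
      filter_upwards [hI.mem_nhds hu] with x hx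
      rw [M.couple x hx, hlam x hx]
    have hkey := h1.unique (h2.congr_of_eventuallyEq heq)
    rw [hkey, hτ u hu]
    have h3 := hrel u hu
    match_scalars
    · nlinarith [h3]
    · ring
  -- Step 2: value of dφ
  have hdφ : ∀ u ∈ I, M.dφ u = l * a.κ u * a.H u * Real.sqrt (1 + a.H u ^ 2) := by
    intro u hu
    have h1 := congrArg norm (hE1 u hu)
    have hcombo : a.H u • a.T u + a.B u = a.H u • a.T u + (1:ℝ) • a.B u := by rw [one_smul]
    rw [norm_smul, norm_smul, b.unit_T _ (M.maps u hu), Real.norm_eq_abs, Real.norm_eq_abs,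
      abs_of_pos (M.dφ_pos u hu), abs_of_pos (hlκH u hu), mul_one, hcombo,
      norm_combo _ _ _ _ (a.unit_T u hu) (a.norm_B hI hu) (a.inner_TB hu)] at h1
    rw [h1]
    congr 2
    ring
  -- Step 3: the tangent of β at corresponding points
  have hTβ : ∀ u ∈ I, b.T (M.φ u)
      = (Real.sqrt (1 + a.H u ^ 2))⁻¹ • (a.H u • a.T u + a.B u) := by
    intro u hu
    have hne : l * a.κ u * a.H u * Real.sqrt (1 + a.H u ^ 2) ≠ 0 :=
      mul_ne_zero (hlκH u hu).ne' (hsq u hu).ne'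
    have h1 := hE1 u hu
    rw [hdφ u hu] at h1
    calc b.T (M.φ u)
        = ((l * a.κ u * a.H u * Real.sqrt (1 + a.H u ^ 2))⁻¹ * (l * a.κ u * a.H u))
            • (a.H u • a.T u + a.B u) := by
          rw [mul_smul, ← h1, inv_smul_smul₀ hne]
      _ = (Real.sqrt (1 + a.H u ^ 2))⁻¹ • (a.H u • a.T u + a.B u) := by
          congr 1
          field_simp
          exact div_self (hlκH u hu).ne'
  -- Now fix s
  intro s hs
  have hJs := M.maps s hs
  have hκ := a.κ_pos s hs
  have hHs := hH s hs
  have hls := hl s hs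
  have hqs := hq s hs
  have hsqs := hsq s hs
  have hsne : Real.sqrt (1 + a.H s ^ 2) ≠ 0 := hsqs.ne'
  have hτs := hτ s hs
  have hTT := a.inner_TT hs
  have hNN := a.inner_NN hs
  have hTN := a.inner_TN hI hs
  have hTB := a.inner_TB hs
  have hNB := a.inner_NB hs
  have hNT : ⟪a.N s, a.T s⟫ = 0 := by rw [real_inner_comm]; exact hTN
  have hBT : ⟪a.B s, a.T s⟫ = 0 := by rw [real_inner_comm]; exact hTB
  have hBN : ⟪a.B s, a.N s⟫ = 0 := by rw [real_inner_comm]; exact hNB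
  -- N_β at the corresponding point
  have hNβ : b.N (M.φ s) = (Real.sqrt (1 + a.H s ^ 2))⁻¹ • (a.T s - a.H s • a.B s) := by
    have h1 : cross3 (b.B (M.φ s)) (b.T (M.φ s)) = b.N (M.φ s) := by
      rw [b.B_def _ hJs, cross3_triple, b.inner_TT hJs, real_inner_comm, b.inner_TN hJ hJs]
      simp
    rw [← h1, hB s hs, hTβ s hs, cross3_smul_right, cross3_add_right, cross3_smul_right,
      a.cross_NT hs, a.cross_NB hI hs]
    congr 1
    module
  -- differentiability of H
  have hκd : DifferentiableAt ℝ a.κ s :=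
    (a.smooth_κ.differentiableOn (by simp)).differentiableAt (hI.mem_nhds hs)
  have hτd : DifferentiableAt ℝ a.τ s :=
    (a.smooth_τ.differentiableOn (by simp)).differentiableAt (hI.mem_nhds hs)
  have hHdiff : DifferentiableAt ℝ a.H s := by
    unfold FrenetCurve.H
    exact hτd.div hκd hκ.ne'
  have hHd : HasDerivAt a.H (deriv a.H s) s := hHdiff.hasDerivAt
  set h' : ℝ := deriv a.H s with hh'def
  -- derivative of sqrt(1+H^2)⁻¹
  have hqd : HasDerivAt (fun u => 1 + a.H u ^ 2) (2 * a.H s * h') s := by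
    have h1 := (hHd.pow 2).const_add (1:ℝ)
    norm_num at h1
    exact h1.const_add (1:ℝ)
  have hsqd : HasDerivAt (fun u => Real.sqrt (1 + a.H u ^ 2))
      ((2 * a.H s * h') / (2 * Real.sqrt (1 + a.H s ^ 2))) s := hqd.sqrt hqs.ne'
  have hrd : HasDerivAt (fun u => (Real.sqrt (1 + a.H u ^ 2))⁻¹)
      (-((2 * a.H s * h') / (2 * Real.sqrt (1 + a.H s ^ 2))) / Real.sqrt (1 + a.H s ^ 2) ^ 2)
      s := hsqd.inv hsne
  have hgd : HasDerivAt (fun u => a.H u • a.T u + a.B u)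
      ((a.H s • (a.κ s • a.N s) + h' • a.T s) + (-(a.τ s) • a.N s)) s :=
    (hHd.smul (a.frenet_T s hs)).add (a.frenet_B s hs)
  have hGd : HasDerivAt (fun u => (Real.sqrt (1 + a.H u ^ 2))⁻¹ • (a.H u • a.T u + a.B u))
      ((Real.sqrt (1 + a.H s ^ 2))⁻¹ • ((a.H s • (a.κ s • a.N s) + h' • a.T s) + (-(a.τ s) • a.N s))
        + (-((2 * a.H s * h') / (2 * Real.sqrt (1 + a.H s ^ 2))) / Real.sqrt (1 + a.H s ^ 2) ^ 2)
          • (a.H s • a.T s + a.B s)) s := hrd.smul hgd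
  -- derivative of T_β ∘ φ via the chain rule
  have hTc : HasDerivAt (fun x => b.T (M.φ x)) (M.dφ s • (b.κ (M.φ s) • b.N (M.φ s))) s :=
    (b.frenet_T _ hJs).scomp s (M.deriv_φ s hs)
  have heqT : (fun x => b.T (M.φ x)) =ᶠ[nhds s]
      (fun u => (Real.sqrt (1 + a.H u ^ 2))⁻¹ • (a.H u • a.T u + a.B u)) := by
    filter_upwards [hI.mem_nhds hs] with x hx
    exact hTβ x hx
  have hkeyT := hTc.unique (hGd.congr_of_eventuallyEq heqT)
  rw [hNβ] at hkeyT
  have hinT := congrArg (fun v : E3 => (⟪v, a.T s⟫ : ℝ)) hkeyT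
  simp only [inner_add_left, inner_sub_left, real_inner_smul_left, hTT, hNT, hBT,
    mul_zero, mul_one, zero_add, add_zero, mul_add, mul_sub, sub_zero, zero_mul] at hinT
  -- hinT should now be a scalar equation
  have hsq2 : Real.sqrt (1 + a.H s ^ 2) ^ 2 = 1 + a.H s ^ 2 := Real.sq_sqrt hqs.le
  have hdφκ : M.dφ s * b.κ (M.φ s) = h' / (1 + a.H s ^ 2) := by
    field_simp at hinT ⊢
    rw [hsq2] at hinT
    nlinarith [hinT, hsq2, hsqs]
  have hκβ := b.κ_pos _ hJs
  have hdφs := M.dφ_pos s hs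
  have hH' : 0 < h' := by
    have h2 : 0 < h' / (1 + a.H s ^ 2) := by rw [← hdφκ]; exact mul_pos hdφs hκβ
    rcases div_pos_iff.mp h2 with h3 | h3
    · exact h3.1
    · linarith [h3.2, hqs]
  have hdφv := hdφ s hs
  have hdφκ' : M.dφ s * b.κ (M.φ s) * (1 + a.H s ^ 2) = h' := by
    rw [hdφκ]; field_simp
  constructor
  · -- curvature
    rw [abs_of_pos hH', eq_div_iff (by positivity)]
    linear_combination hdφκ' - (b.κ (M.φ s) * (1 + a.H s ^ 2)) * hdφv
      + (b.κ (M.φ s) * (l * a.κ s * a.H s) * Real.sqrt (1 + a.H s ^ 2)) * hsq2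
  · -- torsion
    have hBc : HasDerivAt (fun x => b.B (M.φ x)) (M.dφ s • (-(b.τ (M.φ s)) • b.N (M.φ s))) s :=
      (b.frenet_B _ hJs).scomp s (M.deriv_φ s hs)
    have heqB : (fun x => b.B (M.φ x)) =ᶠ[nhds s] a.N := by
      filter_upwards [hI.mem_nhds hs] with x hx
      exact hB x hx
    have hkeyB := hBc.unique ((a.frenet_N s hs).congr_of_eventuallyEq heqB)
    rw [hNβ] at hkeyB
    have hinB := congrArg (fun v : E3 => (⟪v, a.T s⟫ : ℝ)) hkeyB
    simp only [inner_add_left, inner_sub_left, inner_neg_left, real_inner_smul_left, hTT, hNT,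
      hBT, mul_zero, mul_one, zero_add, add_zero, mul_sub, sub_zero, zero_mul, mul_neg,
      neg_mul] at hinB
    -- hinB : scalar equation giving τ_β
    rw [hdφv] at hinB
    field_simp [hsne] at hinB
    rw [eq_div_iff (mul_pos hls hHs).ne']
    have hcan : a.κ s * Real.sqrt (1 + a.H s ^ 2) ≠ 0 := by positivity
    apply mul_left_cancel₀ hcan
    rw [mul_one]
    linear_combination (-(a.κ s * Real.sqrt (1 + a.H s ^ 2))) * hinB
end
end

section
/- Under the slant-helix Mannheim hypotheses, H′(s) ≠ 0 for all s ∈ I, and the axis components of the Frenet frame satisfy ⟨T(s), X⟩ = (H(s)/(λ·H′(s)))·cos θ₀ and ⟨B(s), X⟩ = (1/(λ·H′(s)))·cos θ₀ for all s ∈ I. -/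
open Real RealInnerProductSpace

noncomputable section

/-- Under the slant-helix Mannheim hypotheses, `H′ ≠ 0` on `I` and the axis
components of the Frenet frame are `⟪T, X⟫ = (H/(λ·H′))·cos θ₀` and
`⟪B, X⟫ = (1/(λ·H′))·cos θ₀` on `I`. -/
theorem slant_mannheim_axis_components
    (I : Set ℝ) (hI : IsOpen I) (a : FrenetCurve I)
    (l : ℝ) (hl : l ≠ 0)
    (hrel : ∀ s ∈ I, l * a.κ s * (1 + a.H s ^ 2) = 1)
    (X : E3) (hX : ‖X‖ = 1) (θ₀ : ℝ) (hθ₀ : Real.cos θ₀ ≠ 0)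
    (hslant : ∀ s ∈ I, ⟪a.N s, X⟫ = Real.cos θ₀) :
    ∀ s ∈ I, deriv a.H s ≠ 0 ∧
      ⟪a.T s, X⟫ = (a.H s / (l * deriv a.H s)) * Real.cos θ₀ ∧
      ⟪a.B s, X⟫ = (1 / (l * deriv a.H s)) * Real.cos θ₀ := by

  intro s hs
  have hmem : I ∈ nhds s := hI.mem_nhds hs
  have hκ0 : a.κ s ≠ 0 := (a.κ_pos s hs).ne'
  -- κ⟪T,X⟫ = τ⟪B,X⟫ on I, i.e. ⟪T,X⟫ = H ⟪B,X⟫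
  have key : ∀ t ∈ I, ⟪a.T t, X⟫ = a.H t * ⟪a.B t, X⟫ := by
    intro t ht
    have h1 : HasDerivAt (fun r => (⟪a.N r, X⟫ : ℝ))
        (⟪-(a.κ t) • a.T t + a.τ t • a.B t, X⟫) t := by
      have := (a.frenet_N t ht).inner ℝ (hasDerivAt_const t X)
      simpa using this
    have h2 : HasDerivAt (fun r => (⟪a.N r, X⟫ : ℝ)) 0 t := by
      refine (hasDerivAt_const t (Real.cos θ₀)).congr_of_eventuallyEq ?_
      exact Filter.eventuallyEq_of_mem (hI.mem_nhds ht) (fun r hr => hslant r hr)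
    have h0 : (⟪-(a.κ t) • a.T t + a.τ t • a.B t, X⟫ : ℝ) = 0 := h1.unique h2
    rw [inner_add_left, inner_smul_left, inner_smul_left] at h0
    simp only [RCLike.conj_to_real] at h0
    have hκt : a.κ t ≠ 0 := (a.κ_pos t ht).ne'
    have hHt : a.H t = a.τ t / a.κ t := rfl
    set u : ℝ := (⟪a.T t, X⟫ : ℝ) with hu
    set w : ℝ := (⟪a.B t, X⟫ : ℝ) with hw
    rw [hHt]
    field_simp
    linarith [h0]
  -- derivative of ⟪T,X⟫
  have hT : HasDerivAt (fun t => (⟪a.T t, X⟫ : ℝ)) (a.κ s * Real.cos θ₀) s := by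
    have := (a.frenet_T s hs).inner ℝ (hasDerivAt_const s X)
    simpa [inner_smul_left, hslant s hs] using this
  -- derivative of ⟪B,X⟫
  have hB : HasDerivAt (fun t => (⟪a.B t, X⟫ : ℝ)) (-(a.τ s) * Real.cos θ₀) s := by
    have := (a.frenet_B s hs).inner ℝ (hasDerivAt_const s X)
    simpa [inner_smul_left, hslant s hs] using this
  -- H is differentiable at s
  have hHdiff : DifferentiableAt ℝ a.H s := by
    have dτ : DifferentiableAt ℝ a.τ s :=
      ((a.smooth_τ.contDiffAt hmem).differentiableAt (by simp))
    have dκ : DifferentiableAt ℝ a.κ s :=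
      ((a.smooth_κ.contDiffAt hmem).differentiableAt (by simp))
    exact dτ.div dκ hκ0
  have hH : HasDerivAt a.H (deriv a.H s) s := hHdiff.hasDerivAt
  have hprod : HasDerivAt (fun t => a.H t * (⟪a.B t, X⟫ : ℝ))
      (deriv a.H s * ⟪a.B s, X⟫ + a.H s * (-(a.τ s) * Real.cos θ₀)) s := hH.mul hB
  have hT2 : HasDerivAt (fun t => (⟪a.T t, X⟫ : ℝ))
      (deriv a.H s * ⟪a.B s, X⟫ + a.H s * (-(a.τ s) * Real.cos θ₀)) s := by
    refine hprod.congr_of_eventuallyEq ?_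
    exact Filter.eventuallyEq_of_mem hmem (fun r hr => key r hr)
  have heq : a.κ s * Real.cos θ₀
      = deriv a.H s * ⟪a.B s, X⟫ + a.H s * (-(a.τ s) * Real.cos θ₀) := hT.unique hT2
  -- κ(1+H²) = 1/l
  have hrel' : a.κ s * (1 + a.H s ^ 2) = 1 / l := by
    have := hrel s hs
    field_simp
    linarith [this]
  have hHτ : a.H s * a.τ s = a.κ s * a.H s ^ 2 := by
    have : a.H s = a.τ s / a.κ s := rfl
    rw [this]; field_simp
  have hDw : deriv a.H s * ⟪a.B s, X⟫ = Real.cos θ₀ / l := by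
    have : deriv a.H s * ⟪a.B s, X⟫ = (a.κ s + a.H s * a.τ s) * Real.cos θ₀ := by
      linarith [heq]
    rw [this, hHτ]
    have : (a.κ s + a.κ s * a.H s ^ 2) * Real.cos θ₀
        = (a.κ s * (1 + a.H s ^ 2)) * Real.cos θ₀ := by ring
    rw [this, hrel']
    ring
  have hD0 : deriv a.H s ≠ 0 := by
    intro h
    rw [h, zero_mul] at hDw
    exact hθ₀ (by field_simp at hDw; linarith [hDw]) 
  have hw : (⟪a.B s, X⟫ : ℝ) = Real.cos θ₀ / (l * deriv a.H s) := by
    set w : ℝ := (⟪a.B s, X⟫ : ℝ) with hwdef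
    rw [eq_div_iff (mul_ne_zero hl hD0)]
    rw [eq_div_iff hl] at hDw
    linear_combination hDw
  refine ⟨hD0, ?_, ?_⟩
  · rw [key s hs, hw]; ring
  · rw [hw]; ring
end
end

section
/- Under the slant-helix Mannheim hypotheses (so that H′ never vanishes on I), the curvature and torsion of α are expressed through H by κ(s) = (1/λ)·(1 − H(s)·H″(s)/H′(s)²) and τ(s) = H″(s)/(λ·H′(s)²) for all s ∈ I. -/
open Real RealInnerProductSpace

noncomputable section

/-- Under the slant-helix Mannheim hypotheses (so `H′` never vanishes on `I`),
the curvature and torsion of `α` are `κ = (1/λ)·(1 − H·H″/H′²)` and `τ = H″/(λ·H′²)` on `I`. -/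
theorem slant_mannheim_curvature_torsion
    (I : Set ℝ) (hI : IsOpen I) (a : FrenetCurve I)
    (l : ℝ) (hl : l ≠ 0)
    (hrel : ∀ s ∈ I, l * a.κ s * (1 + a.H s ^ 2) = 1)
    (X : E3) (hX : ‖X‖ = 1) (θ₀ : ℝ) (hθ₀ : Real.cos θ₀ ≠ 0)
    (hslant : ∀ s ∈ I, ⟪a.N s, X⟫ = Real.cos θ₀) :
    ∀ s ∈ I,
      a.κ s = (1 / l) * (1 - a.H s * deriv (deriv a.H) s / (deriv a.H s) ^ 2) ∧
      a.τ s = deriv (deriv a.H) s / (l * (deriv a.H s) ^ 2) := by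
  -- κ never vanishes
  have hκne : ∀ s ∈ I, a.κ s ≠ 0 := fun s hs => (a.κ_pos s hs).ne'
  -- H is smooth on I
  have hHsmooth : ContDiffOn ℝ (⊤ : ℕ∞) a.H I := a.smooth_τ.div a.smooth_κ hκne
  have hH' : ∀ s ∈ I, HasDerivAt a.H (deriv a.H s) s := by
    intro s hs
    exact ((hHsmooth.differentiableOn (by simp)).differentiableAt (hI.mem_nhds hs)).hasDerivAt
  have hH'smooth : ContDiffOn ℝ (⊤ : ℕ∞) (deriv a.H) I := hHsmooth.deriv_of_isOpen hI (by simp)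
  have hH'' : ∀ s ∈ I, HasDerivAt (deriv a.H) (deriv (deriv a.H) s) s := by
    intro s hs
    exact ((hH'smooth.differentiableOn (by simp)).differentiableAt (hI.mem_nhds hs)).hasDerivAt
  -- derivative of ⟪T, X⟫
  have hu : ∀ s ∈ I, HasDerivAt (fun t => ⟪a.T t, X⟫) (a.κ s * Real.cos θ₀) s := by
    intro s hs
    have h := (a.frenet_T s hs).inner ℝ (hasDerivAt_const s X)
    simp only [inner_zero_right, zero_add, real_inner_smul_left, hslant s hs] at h
    exact h
  -- derivative of ⟪B, X⟫
  have hv : ∀ s ∈ I, HasDerivAt (fun t => ⟪a.B t, X⟫) (-(a.τ s * Real.cos θ₀)) s := by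
    intro s hs
    have h := (a.frenet_B s hs).inner ℝ (hasDerivAt_const s X)
    simp only [inner_zero_right, zero_add, real_inner_smul_left, hslant s hs, neg_mul] at h
    exact h
  -- τ v = κ u
  have hNX : ∀ s ∈ I, a.τ s * ⟪a.B s, X⟫ = a.κ s * ⟪a.T s, X⟫ := by
    intro s hs
    have h1 := (a.frenet_N s hs).inner ℝ (hasDerivAt_const s X)
    have h2 : HasDerivAt (fun t => ⟪a.N t, X⟫) 0 s := by
      have hev : (fun t => ⟪a.N t, X⟫) =ᶠ[nhds s] fun _ => Real.cos θ₀ :=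
        Filter.eventuallyEq_of_mem (hI.mem_nhds hs) (fun t ht => hslant t ht)
      exact (hasDerivAt_const s (Real.cos θ₀)).congr_of_eventuallyEq hev
    have h3 := h2.unique h1
    simp only [inner_zero_right, inner_add_left, real_inner_smul_left, zero_add, neg_mul] at h3
    linarith
  -- u = v H
  have huv : ∀ s ∈ I, ⟪a.T s, X⟫ = ⟪a.B s, X⟫ * a.H s := by
    intro s hs
    have h := hNX s hs
    have hκ := hκne s hs
    show (⟪a.T s, X⟫ : ℝ) = ⟪a.B s, X⟫ * (a.τ s / a.κ s)
    rw [← mul_div_assoc, eq_div_iff hκ]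
    linarith
  -- key identity: v H' = cos θ₀ / l
  have key : ∀ s ∈ I, ⟪a.B s, X⟫ * deriv a.H s = Real.cos θ₀ / l := by
    intro s hs
    have hprod : HasDerivAt (fun t => ⟪a.B t, X⟫ * a.H t)
        (-(a.τ s * Real.cos θ₀) * a.H s + ⟪a.B s, X⟫ * deriv a.H s) s :=
      (hv s hs).mul (hH' s hs)
    have hev : (fun t => ⟪a.T t, X⟫) =ᶠ[nhds s] (fun t => ⟪a.B t, X⟫ * a.H t) :=
      Filter.eventuallyEq_of_mem (hI.mem_nhds hs) (fun t ht => huv t ht)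
    have hprod' : HasDerivAt (fun t => ⟪a.T t, X⟫)
        (-(a.τ s * Real.cos θ₀) * a.H s + ⟪a.B s, X⟫ * deriv a.H s) s :=
      hprod.congr_of_eventuallyEq hev
    have heq := (hu s hs).unique hprod'
    have hκ := hκne s hs
    have hτH : a.τ s = a.H s * a.κ s := by
      have : a.H s = a.τ s / a.κ s := rfl
      rw [this, div_mul_cancel₀ _ hκ]
    have hr := hrel s hs
    rw [hτH] at heq
    rw [eq_div_iff hl]
    linear_combination (-l) * heq + Real.cos θ₀ * hr
  -- H' never vanishes
  have hH'ne : ∀ s ∈ I, deriv a.H s ≠ 0 := by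
    intro s hs h0
    have hk := key s hs
    rw [h0, mul_zero] at hk
    rcases div_eq_zero_iff.mp hk.symm with h | h
    · exact hθ₀ h
    · exact hl h
  intro s hs
  have hκ := hκne s hs
  have hH'nes := hH'ne s hs
  -- differentiate v H' = const
  have hprod : HasDerivAt (fun t => ⟪a.B t, X⟫ * deriv a.H t)
      (-(a.τ s * Real.cos θ₀) * deriv a.H s + ⟪a.B s, X⟫ * deriv (deriv a.H) s) s :=
    (hv s hs).mul (hH'' s hs)
  have hconst : HasDerivAt (fun t => ⟪a.B t, X⟫ * deriv a.H t) 0 s := by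
    have hev : (fun t => ⟪a.B t, X⟫ * deriv a.H t) =ᶠ[nhds s] fun _ => Real.cos θ₀ / l :=
      Filter.eventuallyEq_of_mem (hI.mem_nhds hs) (fun t ht => key t ht)
    exact (hasDerivAt_const s (Real.cos θ₀ / l)).congr_of_eventuallyEq hev
  have heq := hconst.unique hprod
  have hkey := key s hs
  have hkeyl : ⟪a.B s, X⟫ * deriv a.H s * l = Real.cos θ₀ := by
    rw [eq_div_iff hl] at hkey; exact hkey
  -- cos θ₀ * H'' = τ cos θ₀ H'² l
  have h2 : Real.cos θ₀ * deriv (deriv a.H) s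
      = Real.cos θ₀ * (a.τ s * (deriv a.H s) ^ 2 * l) := by
    linear_combination (-(l) * deriv a.H s) * heq - deriv (deriv a.H) s * hkeyl
  have h3 := mul_left_cancel₀ hθ₀ h2
  have hτ2 : a.τ s = deriv (deriv a.H) s / (l * (deriv a.H s) ^ 2) := by
    rw [eq_div_iff (mul_ne_zero hl (pow_ne_zero 2 hH'nes))]
    linear_combination -h3
  refine ⟨?_, hτ2⟩
  -- κ formula from the Mannheim relation
  have hr := hrel s hs
  have hH : a.H s * a.κ s = a.τ s := by
    have : a.H s = a.τ s / a.κ s := rfl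
    rw [this, div_mul_cancel₀ _ hκ]
  rw [h3]
  have hdiv : a.H s * (a.τ s * (deriv a.H s) ^ 2 * l) / (deriv a.H s) ^ 2
      = a.H s * a.τ s * l := by
    field_simp
  rw [hdiv]
  field_simp
  linear_combination hr - l * a.H s * hH
end
end

section
/- Under the slant-helix Mannheim hypotheses, the harmonic curvature H of α satisfies the ordinary differential equation (1 + H(s)²)·H″(s) = H(s)·H′(s)² for all s ∈ I; equivalently, the function H′/√(1 + H²) is constant on I. -/
open Real RealInnerProductSpace

noncomputable section

/-- Under the slant-helix Mannheim hypotheses, the harmonic curvature `H`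
satisfies `(1 + H²)·H″ = H·H′²` on `I`; equivalently, `H′/√(1 + H²)` is constant on `I`. -/
theorem slant_mannheim_ode
    (I : Set ℝ) (hI : IsOpen I) (hIconn : I.OrdConnected) (a : FrenetCurve I)
    (l : ℝ) (hl : l ≠ 0)
    (hrel : ∀ s ∈ I, l * a.κ s * (1 + a.H s ^ 2) = 1)
    (X : E3) (hX : ‖X‖ = 1) (θ₀ : ℝ) (hθ₀ : Real.cos θ₀ ≠ 0)
    (hslant : ∀ s ∈ I, ⟪a.N s, X⟫ = Real.cos θ₀) :
    (∀ s ∈ I, (1 + a.H s ^ 2) * deriv (deriv a.H) s = a.H s * (deriv a.H s) ^ 2) ∧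
    (∀ s ∈ I, ∀ t ∈ I,
      deriv a.H s / Real.sqrt (1 + a.H s ^ 2) = deriv a.H t / Real.sqrt (1 + a.H t ^ 2)) := by
  set c := Real.cos θ₀ with hc
  set f : ℝ → ℝ := fun s => ⟪a.T s, X⟫ with hfdef
  set h : ℝ → ℝ := fun s => ⟪a.B s, X⟫ with hhdef
  have hκne : ∀ s ∈ I, a.κ s ≠ 0 := fun s hs => (a.κ_pos s hs).ne'
  have hτH : ∀ s ∈ I, a.τ s = a.κ s * a.H s := by
    intro s hs
    have hκ := hκne s hs
    simp only [FrenetCurve.H]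
    field_simp
  have hXd : ∀ s : ℝ, HasDerivAt (fun _ : ℝ => X) (0 : E3) s := fun s => hasDerivAt_const _ _
  -- derivative of f
  have hfd : ∀ s ∈ I, HasDerivAt f (a.κ s * c) s := by
    intro s hs
    have := HasDerivAt.inner ℝ (a.frenet_T s hs) (hXd s)
    simpa only [inner_zero_right, zero_add, real_inner_smul_left, hslant s hs] using this
  -- derivative of h
  have hhd : ∀ s ∈ I, HasDerivAt h (-(a.τ s * c)) s := by
    intro s hs
    have := HasDerivAt.inner ℝ (a.frenet_B s hs) (hXd s)
    simpa only [inner_zero_right, zero_add, real_inner_smul_left, hslant s hs, neg_smul, inner_neg_left,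
      neg_mul] using this
  -- inner N X constant
  have hgd0 : ∀ s ∈ I, HasDerivAt (fun t => ⟪a.N t, X⟫) 0 s := by
    intro s hs
    have hev : (fun t => ⟪a.N t, X⟫) =ᶠ[nhds s] fun _ => c := by
      filter_upwards [hI.mem_nhds hs] with t ht using hslant t ht
    exact (hasDerivAt_const s c).congr_of_eventuallyEq hev
  have hgd : ∀ s ∈ I, HasDerivAt (fun t => ⟪a.N t, X⟫) (-(a.κ s) * f s + a.τ s * h s) s := by
    intro s hs
    have := HasDerivAt.inner ℝ (a.frenet_N s hs) (hXd s)
    simpa only [inner_zero_right, zero_add, inner_add_left, real_inner_smul_left,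
      neg_smul, inner_neg_left, neg_mul] using this
  have hbal : ∀ s ∈ I, -(a.κ s) * f s + a.τ s * h s = 0 :=
    fun s hs => (hgd s hs).unique (hgd0 s hs)
  -- f = H * h on I
  have hfH : ∀ s ∈ I, f s = a.H s * h s := by
    intro s hs
    have hb := hbal s hs
    have hτ := hτH s hs
    have hκ := hκne s hs
    rw [hτ] at hb
    have hκf : a.κ s * f s = a.κ s * (a.H s * h s) := by linear_combination -hb
    exact mul_left_cancel₀ hκ hκf
  -- smoothness of H
  have hHsm : ContDiffOn ℝ (⊤ : ℕ∞) a.H I := a.smooth_τ.div a.smooth_κ hκne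
  have hH'sm : ContDiffOn ℝ (⊤ : ℕ∞) (deriv a.H) I := hHsm.deriv_of_isOpen hI (by simp)
  have hH : ∀ s ∈ I, HasDerivAt a.H (deriv a.H s) s := by
    intro s hs
    exact (((hHsm.differentiableOn (by simp)) s hs).differentiableAt (hI.mem_nhds hs)).hasDerivAt
  have hH' : ∀ s ∈ I, HasDerivAt (deriv a.H) (deriv (deriv a.H) s) s := by
    intro s hs
    exact (((hH'sm.differentiableOn (by simp)) s hs).differentiableAt (hI.mem_nhds hs)).hasDerivAt
  -- key identity: H' * h = c / l
  have hkey : ∀ s ∈ I, deriv a.H s * h s = c / l := by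
    intro s hs
    have hev : f =ᶠ[nhds s] fun t => a.H t * h t := by
      filter_upwards [hI.mem_nhds hs] with t ht using hfH t ht
    have hrhs : HasDerivAt (fun t => a.H t * h t)
        (deriv a.H s * h s + a.H s * -(a.τ s * c)) s := (hH s hs).mul (hhd s hs)
    have hlhs : HasDerivAt (fun t => a.H t * h t) (a.κ s * c) s :=
      (hfd s hs).congr_of_eventuallyEq hev.symm
    have heq : a.κ s * c = deriv a.H s * h s + a.H s * -(a.τ s * c) := hlhs.unique hrhs
    have hr := hrel s hs
    have hτ := hτH s hs
    rw [eq_div_iff hl]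
    linear_combination -l * heq + l * a.H s * c * hτ + c * hr
  -- differentiate the key identity
  have hkey' : ∀ s ∈ I,
      deriv (deriv a.H) s * h s + deriv a.H s * -(a.τ s * c) = 0 := by
    intro s hs
    have hev : (fun t => deriv a.H t * h t) =ᶠ[nhds s] fun _ => c / l := by
      filter_upwards [hI.mem_nhds hs] with t ht using hkey t ht
    have h0 : HasDerivAt (fun t => deriv a.H t * h t) 0 s :=
      (hasDerivAt_const s (c / l)).congr_of_eventuallyEq hev
    have h1 : HasDerivAt (fun t => deriv a.H t * h t)
        (deriv (deriv a.H) s * h s + deriv a.H s * -(a.τ s * c)) s :=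
      (hH' s hs).mul (hhd s hs)
    exact h1.unique h0
  -- the ODE
  have hODE : ∀ s ∈ I, (1 + a.H s ^ 2) * deriv (deriv a.H) s = a.H s * (deriv a.H s) ^ 2 := by
    intro s hs
    have hA := hkey' s hs
    have hB := hkey s hs
    have hC := hτH s hs
    have hD := hrel s hs
    -- H'' * c = l * K * Hs * H1^2 * c
    have e1 : deriv (deriv a.H) s * c =
        l * a.κ s * a.H s * (deriv a.H s) ^ 2 * c := by
      have e2 : l * (deriv (deriv a.H) s * (deriv a.H s * h s)) = deriv (deriv a.H) s * c := by
        rw [hB]; field_simp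
      have e3 : deriv (deriv a.H) s * h s = deriv a.H s * (a.τ s * c) := by linarith
      calc deriv (deriv a.H) s * c = l * (deriv a.H s * (deriv (deriv a.H) s * h s)) := by
            rw [← e2]; ring
        _ = l * (deriv a.H s * (deriv a.H s * (a.τ s * c))) := by rw [e3]
        _ = l * a.κ s * a.H s * (deriv a.H s) ^ 2 * c := by rw [hC]; ring
    have e4 : deriv (deriv a.H) s = l * a.κ s * a.H s * (deriv a.H s) ^ 2 :=
      mul_right_cancel₀ hθ₀ e1
    calc (1 + a.H s ^ 2) * deriv (deriv a.H) s
        = (l * a.κ s * (1 + a.H s ^ 2)) * (a.H s * (deriv a.H s) ^ 2) := by rw [e4]; ring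
      _ = a.H s * (deriv a.H s) ^ 2 := by rw [hD]; ring
  refine ⟨hODE, ?_⟩
  -- second part: constancy of H' / sqrt (1 + H^2)
  set F : ℝ → ℝ := fun s => deriv a.H s / Real.sqrt (1 + a.H s ^ 2) with hFdef
  have hupos : ∀ s : ℝ, (0 : ℝ) < 1 + a.H s ^ 2 := fun s => by positivity
  have hFd : ∀ s ∈ I, HasDerivAt F 0 s := by
    intro s hs
    have hu : HasDerivAt (fun t => 1 + a.H t ^ 2) (2 * a.H s * deriv a.H s) s := by
      have := ((hH s hs).pow 2).const_add 1
      simpa [mul_comm, mul_assoc, mul_left_comm] using this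
    have hsq : HasDerivAt (fun t => Real.sqrt (1 + a.H t ^ 2))
        ((2 * a.H s * deriv a.H s) / (2 * Real.sqrt (1 + a.H s ^ 2))) s :=
      hu.sqrt (hupos s).ne'
    have hsqpos : 0 < Real.sqrt (1 + a.H s ^ 2) := Real.sqrt_pos.mpr (hupos s)
    have hdiv := (hH' s hs).div hsq hsqpos.ne'
    have hder0 : (deriv (deriv a.H) s * Real.sqrt (1 + a.H s ^ 2) -
        deriv a.H s * ((2 * a.H s * deriv a.H s) / (2 * Real.sqrt (1 + a.H s ^ 2)))) /
        (Real.sqrt (1 + a.H s ^ 2)) ^ 2 = 0 := by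
      have hsqr : Real.sqrt (1 + a.H s ^ 2) ^ 2 = 1 + a.H s ^ 2 :=
        Real.sq_sqrt (hupos s).le
      have hODEs := hODE s hs
      rw [div_eq_zero_iff]
      left
      field_simp [hsqpos.ne']
      linear_combination deriv (deriv a.H) s * hsqr + hODEs
    rw [← hder0]
    exact hdiv
  have hconv : Convex ℝ I := convex_iff_ordConnected.mpr hIconn
  intro s hs t ht
  have hdiff : DifferentiableOn ℝ F I :=
    fun x hx => ((hFd x hx).differentiableAt).differentiableWithinAt
  have hfz : ∀ x ∈ I, fderivWithin ℝ F I x = 0 := by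
    intro x hx
    rw [fderivWithin_of_isOpen hI hx, (hFd x hx).hasFDerivAt.fderiv]
    ext y
    simp
  exact hconv.is_const_of_fderivWithin_eq_zero hdiff hfz hs ht
end
end

section
/- Let I ⊆ ℝ be an open interval and h : I → ℝ a twice continuously differentiable function such that h′(s) ≠ 0 for all s ∈ I and (1 + h(s)²)·h″(s) = h(s)·h′(s)² for all s ∈ I. Then there exist nonzero real constants a > 0 and b ≠ 0 such that h(s) = ½·(a·e^{bs} − a⁻¹·e^{−bs}) for all s ∈ I (equivalently, h(s) = sinh(bs + ln a); for a = b = 1 this is h(s) = sinh s). -/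
open Real

/-! The ODE says exactly that `h' / √(1 + h²)`, the derivative of `arsinh ∘ h`, has derivative
zero. On an interval it is therefore a constant `b`, nonzero because `h'` never vanishes, so
`arsinh ∘ h` is affine, `h s = sinh (b s + c)`, and `a = exp c` gives the stated form. -/

theorem HasDerivAt.div_sqrt_one_add_sq {f f' : ℝ → ℝ} {f'' x : ℝ}
    (hf : HasDerivAt f (f' x) x) (hf' : HasDerivAt f' f'' x) :
    HasDerivAt (fun t => f' t / √(1 + f t ^ 2))
      (((1 + f x ^ 2) * f'' - f x * f' x ^ 2) / √(1 + f x ^ 2) ^ 3) x := by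
  have hpos : 0 < 1 + f x ^ 2 := by positivity
  have hsqrt : HasDerivAt (fun t => √(1 + f t ^ 2)) (f x * f' x / √(1 + f x ^ 2)) x := by
    convert ((hf.fun_pow 2).const_add 1).sqrt hpos.ne' using 1
    field_simp
    ring
  have hne : √(1 + f x ^ 2) ≠ 0 := (sqrt_pos.2 hpos).ne'
  refine (hf'.fun_div hsqrt hne).congr_deriv ?_
  have hsq : √(1 + f x ^ 2) ^ 2 = 1 + f x ^ 2 := sq_sqrt hpos.le
  field_simp
  rw [hsq]

theorem IsOpen.exists_eq_sinh_of_hasDerivAt {s : Set ℝ} (hs : IsOpen s) (hs' : IsPreconnected s)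
    {f : ℝ → ℝ} {b : ℝ} (hf : ∀ x ∈ s, HasDerivAt f (b * √(1 + f x ^ 2)) x) :
    ∃ c, ∀ x ∈ s, f x = sinh (b * x + c) := by
  have harsinh : ∀ x ∈ s, HasDerivAt (fun t => arsinh (f t)) b x := fun x hx => by
    have hne : √(1 + f x ^ 2) ≠ 0 := (sqrt_pos.2 (by positivity)).ne'
    convert (hf x hx).arsinh using 1
    rw [smul_eq_mul, mul_comm b, ← mul_assoc, inv_mul_cancel₀ hne, one_mul]
  obtain ⟨c, hc⟩ := hs.exists_eq_add_of_deriv_eq hs'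
    (fun x hx => (harsinh x hx).differentiableAt.differentiableWithinAt)
    (differentiable_id.const_mul b).differentiableOn
    (fun x hx => by simp [(harsinh x hx).deriv])
  exact ⟨c, fun x hx => by simpa [sinh_arsinh] using congrArg sinh (hc hx)⟩

theorem Real.sinh_add_log {a : ℝ} (ha : 0 < a) (x : ℝ) :
    sinh (x + log a) = (a * exp x - a⁻¹ * exp (-x)) / 2 := by
  rw [sinh_eq, exp_add, neg_add, exp_add, exp_neg (log a), exp_log ha]
  ring

/-- If `h : I → ℝ` is C² on an open interval `I`, `h′` never vanishes on `I`,
and `(1 + h²)·h″ = h·h′²` on `I`, then there are constants `a > 0` and `b ≠ 0` with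
`h s = ½(a·e^{bs} − a⁻¹·e^{−bs})` on `I` (i.e. `h s = sinh (b·s + ln a)`; for `a = b = 1`
this is `h s = sinh s`). -/
theorem mannheim_ode_solution
    (I : Set ℝ) (hI : IsOpen I) (hIconn : I.OrdConnected)
    (h : ℝ → ℝ) (hC2 : ContDiffOn ℝ 2 h I)
    (hd : ∀ s ∈ I, deriv h s ≠ 0)
    (hode : ∀ s ∈ I, (1 + h s ^ 2) * deriv (deriv h) s = h s * deriv h s ^ 2) :
    ∃ a b : ℝ, 0 < a ∧ b ≠ 0 ∧
      ∀ s ∈ I, h s = (a * Real.exp (b * s) - a⁻¹ * Real.exp (-(b * s))) / 2 := by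
  rcases I.eq_empty_or_nonempty with rfl | ⟨s₀, hs₀⟩
  · exact ⟨1, 1, one_pos, one_ne_zero, fun _ => False.elim⟩
  have hh : ∀ s ∈ I, HasDerivAt h (deriv h s) s := fun s hs =>
    ((hC2.differentiableOn two_ne_zero s hs).differentiableAt (hI.mem_nhds hs)).hasDerivAt
  have hh' : ∀ s ∈ I, HasDerivAt (deriv h) (deriv (deriv h) s) s := fun s hs =>
    (((hC2.deriv_of_isOpen hI le_rfl).differentiableOn one_ne_zero s hs).differentiableAt
      (hI.mem_nhds hs)).hasDerivAt
  have hφ : ∀ s ∈ I, HasDerivAt (fun t => deriv h t / √(1 + h t ^ 2)) 0 s := fun s hs => by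
    simpa [hode s hs] using (hh s hs).div_sqrt_one_add_sq (hh' s hs)
  obtain ⟨b, hb⟩ := hI.exists_is_const_of_deriv_eq_zero hIconn.isPreconnected
    (fun s hs => (hφ s hs).differentiableAt.differentiableWithinAt) (fun s hs => (hφ s hs).deriv)
  have hb₀ : b ≠ 0 := hb s₀ hs₀ ▸ div_ne_zero (hd s₀ hs₀) (by positivity)
  obtain ⟨c, hc⟩ := hI.exists_eq_sinh_of_hasDerivAt hIconn.isPreconnected (b := b) fun s hs => by
    convert hh s hs using 1
    rw [← hb s hs]
    field_simp
  refine ⟨exp c, b, exp_pos c, hb₀, fun s hs => ?_⟩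
  rw [hc s hs, ← sinh_add_log (exp_pos c), log_exp]
end

section
/- Under the slant-helix Mannheim hypotheses, there exist real constants a > 0 and b ≠ 0 such that the harmonic curvature of α is H(s) = ½·(a·e^{bs} − a⁻¹·e^{−bs}) for all s ∈ I; in particular, for a = b = 1, H(s) = sinh s. -/
open Real RealInnerProductSpace

noncomputable section

private lemma auxConst {I : Set ℝ} (hI : IsOpen I) (hconv : Convex ℝ I) {f : ℝ → ℝ}
    (hf : ∀ s ∈ I, HasDerivAt f 0 s) {x y : ℝ} (hx : x ∈ I) (hy : y ∈ I) : f x = f y := by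
  apply hconv.is_const_of_fderivWithin_eq_zero
    (fun s hs => ((hf s hs).differentiableAt).differentiableWithinAt) _ hx hy
  intro s hs
  rw [fderivWithin_of_isOpen hI hs]
  have h0 : HasFDerivAt f (0 : ℝ →L[ℝ] ℝ) s := by
    simpa using (hf s hs).hasFDerivAt
  exact h0.fderiv

/-- Under the slant-helix Mannheim hypotheses, there are constants `a > 0` and
`b ≠ 0` such that the harmonic curvature of `α` is `H s = ½(a·e^{bs} − a⁻¹·e^{−bs})` on `I`;
in particular, for `a = b = 1`, `H s = sinh s`. -/
theorem slant_mannheim_H_is_sinh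
    (I : Set ℝ) (hI : IsOpen I) (hIconn : I.OrdConnected) (a : FrenetCurve I)
    (l : ℝ) (hl : l ≠ 0)
    (hrel : ∀ s ∈ I, l * a.κ s * (1 + a.H s ^ 2) = 1)
    (X : E3) (hX : ‖X‖ = 1) (θ₀ : ℝ) (hθ₀ : Real.cos θ₀ ≠ 0)
    (hslant : ∀ s ∈ I, ⟪a.N s, X⟫ = Real.cos θ₀) :
    ∃ c₁ c₂ : ℝ, 0 < c₁ ∧ c₂ ≠ 0 ∧
      ∀ s ∈ I, a.H s = (c₁ * Real.exp (c₂ * s) - c₁⁻¹ * Real.exp (-(c₂ * s))) / 2 := by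
  by_cases hne : I.Nonempty
  swap
  · exact ⟨1, 1, one_pos, one_ne_zero, fun s hs => absurd ⟨s, hs⟩ hne⟩
  obtain ⟨s₀, hs₀⟩ := hne
  have hconv : Convex ℝ I := convex_iff_ordConnected.mpr hIconn
  have hpre : IsPreconnected I := hconv.isPreconnected
  set u : ℝ → ℝ := fun s => ⟪a.T s, X⟫ with hu_def
  set w : ℝ → ℝ := fun s => ⟪a.B s, X⟫ with hw_def
  -- derivatives of u and w
  have hu' : ∀ s ∈ I, HasDerivAt u (a.κ s * Real.cos θ₀) s := by
    intro s hs
    have h := (a.frenet_T s hs).inner ℝ (hasDerivAt_const s X)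
    simpa only [inner_zero_right, real_inner_smul_left, hslant s hs, zero_add, add_zero] using h
  have hw' : ∀ s ∈ I, HasDerivAt w (-(a.τ s * Real.cos θ₀)) s := by
    intro s hs
    have h := (a.frenet_B s hs).inner ℝ (hasDerivAt_const s X)
    simpa only [inner_zero_right, real_inner_smul_left, hslant s hs, zero_add, add_zero,
      neg_smul, inner_neg_left, neg_mul] using h
  -- key relation κ u = τ w
  have hkey : ∀ s ∈ I, a.κ s * u s = a.τ s * w s := by
    intro s hs
    have hd := (a.frenet_N s hs).inner ℝ (hasDerivAt_const s X)
    have hzero : HasDerivAt (fun t => ⟪a.N t, X⟫) 0 s := by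
      have hev : (fun t => ⟪a.N t, X⟫) =ᶠ[nhds s] fun _ => Real.cos θ₀ :=
        Filter.eventuallyEq_of_mem (hI.mem_nhds hs) (fun t ht => hslant t ht)
      exact (hasDerivAt_const s (Real.cos θ₀)).congr_of_eventuallyEq hev
    have huniq := hd.unique hzero
    simp only [inner_zero_right, inner_add_left, real_inner_smul_left, zero_add,
      neg_smul, inner_neg_left, neg_mul] at huniq
    linarith [huniq]
  have hu_cont : ContinuousOn u I := fun s hs => (hu' s hs).continuousAt.continuousWithinAt
  have hw_cont : ContinuousOn w I := fun s hs => (hw' s hs).continuousAt.continuousWithinAt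
  -- constancy of u² + w²
  set m : ℝ := u s₀ ^ 2 + w s₀ ^ 2 with hm_def
  have hconst : ∀ s ∈ I, u s ^ 2 + w s ^ 2 = m := by
    intro s hs
    have hd : ∀ t ∈ I, HasDerivAt (fun r => u r ^ 2 + w r ^ 2) 0 t := by
      intro t ht
      have h1 := ((hu' t ht).pow 2).add ((hw' t ht).pow 2)
      refine h1.congr_deriv ?_
      have hk := hkey t ht
      push_cast
      linear_combination (2 * Real.cos θ₀) * hk
    exact auxConst hI hconv hd hs hs₀
  have hm_nonneg : 0 ≤ m := by positivity
  have hm : 0 < m := by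
    rcases hm_nonneg.lt_or_eq with h | h
    · exact h
    exfalso
    have huz : ∀ s ∈ I, u s = 0 := by
      intro s hs
      have hc := hconst s hs
      nlinarith [sq_nonneg (u s), sq_nonneg (w s)]
    have h1 : HasDerivAt u 0 s₀ := by
      have hev : u =ᶠ[nhds s₀] fun _ => (0 : ℝ) :=
        Filter.eventuallyEq_of_mem (hI.mem_nhds hs₀) (fun t ht => huz t ht)
      exact (hasDerivAt_const s₀ (0 : ℝ)).congr_of_eventuallyEq hev
    have h2 := (hu' s₀ hs₀).unique h1
    exact mul_ne_zero (a.κ_pos s₀ hs₀).ne' hθ₀ h2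
  -- w never vanishes
  have hwne : ∀ s ∈ I, w s ≠ 0 := by
    intro s hs hw0
    have hk := hkey s hs
    have hu0 : u s = 0 := by
      have hκ := (a.κ_pos s hs).ne'
      rw [hw0, mul_zero] at hk
      exact (mul_eq_zero.1 hk).resolve_left hκ
    have := hconst s hs
    rw [hu0, hw0] at this
    simp at this
    exact hm.ne' this.symm
  -- H in terms of u, w
  have hHw : ∀ s ∈ I, a.H s * w s = u s := by
    intro s hs
    have hκ := (a.κ_pos s hs).ne'
    have hk := hkey s hs
    show a.τ s / a.κ s * w s = u s
    field_simp
    linarith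
  have hH_eq : ∀ s ∈ I, a.H s = u s / w s := by
    intro s hs
    rw [← hHw s hs, mul_div_assoc, div_self (hwne s hs), mul_one]
  have hK_pos : ∀ s, (0 : ℝ) < 1 + a.H s ^ 2 := fun s => by positivity
  have hκK : ∀ s ∈ I, a.κ s * (1 + a.H s ^ 2) = 1 / l := by
    intro s hs
    have := hrel s hs
    field_simp
    linarith
  -- w² (1 + H²) = m
  have hwK : ∀ s ∈ I, w s ^ 2 * (1 + a.H s ^ 2) = m := by
    intro s hs
    have h1 := hHw s hs
    have h2 := hconst s hs
    linear_combination h2 + (a.H s * w s + u s) * h1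
  set v : ℝ → ℝ := fun s => w s * Real.sqrt (1 + a.H s ^ 2) with hv_def
  have hv2 : ∀ s ∈ I, v s ^ 2 = m := by
    intro s hs
    have : v s ^ 2 = w s ^ 2 * (1 + a.H s ^ 2) := by
      rw [hv_def]
      rw [mul_pow, Real.sq_sqrt (hK_pos s).le]
    rw [this, hwK s hs]
  have hvne : ∀ s ∈ I, v s ≠ 0 := by
    intro s hs
    exact mul_ne_zero (hwne s hs) (Real.sqrt_ne_zero'.mpr (hK_pos s))
  have hH_cont : ContinuousOn a.H I := by
    have : ContinuousOn (fun s => a.τ s / a.κ s) I :=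
      (a.smooth_τ.continuousOn).div (a.smooth_κ.continuousOn) (fun s hs => (a.κ_pos s hs).ne')
    exact this
  have hv_cont : ContinuousOn v I := by
    apply hw_cont.mul
    exact (continuousOn_const.add (hH_cont.pow 2)).sqrt
  -- v is constant
  have hvconst : ∀ s ∈ I, v s = v s₀ := by
    intro s hs
    have h2 : (v s - v s₀) * (v s + v s₀) = 0 := by
      have e1 := hv2 s hs
      have e2 := hv2 s₀ hs₀
      nlinarith
    rcases mul_eq_zero.1 h2 with h | h
    · linarith
    · exfalso
      have hvs : v s = -v s₀ := by linarith
      rcases lt_or_gt_of_ne (hvne s₀ hs₀) with hneg | hpos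
      · have h0 : (0 : ℝ) ∈ Set.Icc (v s₀) (v s) := ⟨hneg.le, by rw [hvs]; linarith⟩
        obtain ⟨t, ht, ht0⟩ := hpre.intermediate_value hs₀ hs hv_cont h0
        exact hvne t ht ht0
      · have h0 : (0 : ℝ) ∈ Set.Icc (v s) (v s₀) := ⟨by rw [hvs]; linarith, hpos.le⟩
        obtain ⟨t, ht, ht0⟩ := hpre.intermediate_value hs hs₀ hv_cont h0
        exact hvne t ht ht0
  -- derivative of H
  have hH' : ∀ s ∈ I, HasDerivAt a.H (Real.cos θ₀ / (l * w s)) s := by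
    intro s hs
    have hdiv := (hu' s hs).div (hw' s hs) (hwne s hs)
    have hev : a.H =ᶠ[nhds s] fun t => u t / w t :=
      Filter.eventuallyEq_of_mem (hI.mem_nhds hs) (fun t ht => hH_eq t ht)
    have hd2 := hdiv.congr_of_eventuallyEq hev
    have hval : (a.κ s * Real.cos θ₀ * w s - u s * -(a.τ s * Real.cos θ₀)) / w s ^ 2
        = Real.cos θ₀ / (l * w s) := by
      have hκ := (a.κ_pos s hs).ne'
      have hHwv := hHw s hs
      have hτ : a.τ s = a.κ s * a.H s := by
        have : a.H s = a.τ s / a.κ s := rfl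
        rw [this]
        field_simp
      rw [← hHwv, hτ]
      have hw0 := hwne s hs
      field_simp
      ring_nf
      linear_combination hrel s hs
      
    rw [hval] at hd2
    exact hd2
  -- arsinh(H) - b s is constant
  set b : ℝ := Real.cos θ₀ / (l * v s₀) with hb_def
  have hbne : b ≠ 0 := div_ne_zero hθ₀ (mul_ne_zero hl (hvne s₀ hs₀))
  set g : ℝ → ℝ := fun s => Real.arsinh (a.H s) - b * s with hg_def
  have hg' : ∀ s ∈ I, HasDerivAt g 0 s := by
    intro s hs
    have h1 : HasDerivAt (fun t => Real.arsinh (a.H t))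
        ((Real.sqrt (1 + a.H s ^ 2))⁻¹ * (Real.cos θ₀ / (l * w s))) s :=
      (Real.hasDerivAt_arsinh (a.H s)).comp s (hH' s hs)
    have hsq : Real.sqrt (1 + a.H s ^ 2) ≠ 0 := (Real.sqrt_ne_zero'.2 (hK_pos s))
    have h2 : (Real.sqrt (1 + a.H s ^ 2))⁻¹ * (Real.cos θ₀ / (l * w s)) = b := by
      rw [hb_def, ← hvconst s hs, hv_def]
      field_simp
    have h3 : HasDerivAt (fun t => b * t) b s := by
      simpa using (hasDerivAt_id s).const_mul b
    have h4 := h1.sub h3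
    rw [h2, sub_self] at h4
    exact h4
  set C : ℝ := Real.arsinh (a.H s₀) - b * s₀ with hC_def
  refine ⟨Real.exp C, b, Real.exp_pos _, hbne, ?_⟩
  intro s hs
  have h3 : Real.arsinh (a.H s) = b * s + C := by
    have := auxConst hI hconv hg' hs hs₀
    simp only [hg_def, hC_def] at this ⊢
    linarith [this]
  have h4 : a.H s = Real.sinh (b * s + C) := by
    rw [← h3, Real.sinh_arsinh]
  rw [h4, Real.sinh_eq, ← Real.exp_neg]
  rw [Real.exp_add, neg_add, Real.exp_add]
  ring
end
end

section
/- Let μ be a nonzero real constant, set α̃ := β + μ·B_β : J → E³ (so α̃′ = T_β − μτ_βN_β and α̃ is regular), and let T̃ := α̃′/‖α̃′‖ be the unit tangent of α̃. Assume that for every s̄ ∈ J the derivative T̃′(s̄) is parallel to B_β(s̄) (i.e. the principal normal of α̃ is parallel to the binormal of β, so β is the Mannheim partner of α̃), and let θ : J → ℝ be a smooth function with T̃(s̄) = cos θ(s̄)·T_β(s̄) + sin θ(s̄)·N_β(s̄) for all s̄ ∈ J. Then θ′(s̄) = −κ_β(s̄) and tan θ(s̄) = −μ·τ_β(s̄)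 (equivalently μ·κ_β(s̄)·H_β(s̄) = −tan θ(s̄)) for all s̄ ∈ J. -/
open Real RealInnerProductSpace

noncomputable section

lemma cross3_inner_right (x y : E3) : ⟪cross3 x y, y⟫ = 0 := by
  simp [cross3, PiLp.inner_apply, crossProduct, Fin.sum_univ_three]
  ring

lemma cross3_inner_left (x y : E3) : ⟪cross3 x y, x⟫ = 0 := by
  simp [cross3, PiLp.inner_apply, crossProduct, Fin.sum_univ_three]
  ring

/-- Let `μ ≠ 0` be constant, `α̃ := β + μ·B_β` (so `α̃′ = T_β − μτ_β N_β` and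
`α̃` is regular), and let `T̃ := α̃′/‖α̃′‖`. If `T̃′` is parallel to `B_β` on `J` (the principal
normal of `α̃` is parallel to the binormal of `β`, i.e. `β` is the Mannheim partner of `α̃`),
and `θ : J → ℝ` is a smooth angle function with `T̃ = cos θ · T_β + sin θ · N_β` on `J`, then
`θ′ = −κ_β` and `tan θ = −μ·τ_β` (equivalently `μ·κ_β·H_β = −tan θ`) on `J`. -/
theorem mannheim_partner_angle
    (J : Set ℝ) (hJ : IsOpen J) (b : FrenetCurve J)
    (μ : ℝ) (hμ : μ ≠ 0)
    (αtld : ℝ → E3) (hαtld : αtld = fun s => b.α s + μ • b.B s)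
    (Ttld : ℝ → E3) (hTtld : Ttld = fun s => ‖deriv αtld s‖⁻¹ • deriv αtld s)
    (hpar : ∀ s ∈ J, ∃ c : ℝ, deriv Ttld s = c • b.B s)
    (θ : ℝ → ℝ) (hθsm : ContDiffOn ℝ (⊤ : ℕ∞) θ J)
    (hθ : ∀ s ∈ J, Ttld s = Real.cos (θ s) • b.T s + Real.sin (θ s) • b.N s) :
    ∀ s ∈ J, deriv θ s = -b.κ s ∧ Real.tan (θ s) = -(μ * b.τ s) := by
  have hTT : ∀ s ∈ J, ⟪b.T s, b.T s⟫ = 1 := fun s hs => by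
    rw [real_inner_self_eq_norm_sq, b.unit_T s hs]; norm_num
  have hNN : ∀ s ∈ J, ⟪b.N s, b.N s⟫ = 1 := fun s hs => by
    rw [real_inner_self_eq_norm_sq, b.unit_N s hs]; norm_num
  have hTN : ∀ s ∈ J, ⟪b.T s, b.N s⟫ = 0 := by
    intro s hs
    have h1 : HasDerivAt (fun t => ⟪b.T t, b.T t⟫)
        (⟪b.T s, b.κ s • b.N s⟫ + ⟪b.κ s • b.N s, b.T s⟫) s :=
      (b.frenet_T s hs).inner ℝ (b.frenet_T s hs)
    have h2 : HasDerivAt (fun t => ⟪b.T t, b.T t⟫) 0 s :=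
      (hasDerivAt_const s (1:ℝ)).congr_of_eventuallyEq
        (Filter.eventuallyEq_of_mem (hJ.mem_nhds hs) (fun t ht => hTT t ht))
    have h3 := h1.unique h2
    rw [real_inner_smul_left, real_inner_smul_right, real_inner_comm (b.N s) (b.T s)] at h3
    have hκ := (b.κ_pos s hs).ne'
    have h4 : b.κ s * ⟪b.N s, b.T s⟫ = 0 := by linarith
    rw [real_inner_comm]
    exact (mul_eq_zero.mp h4).resolve_left hκ
  have hNT : ∀ s ∈ J, ⟪b.N s, b.T s⟫ = 0 := fun s hs => by
    rw [real_inner_comm]; exact hTN s hs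
  have hBN : ∀ s ∈ J, ⟪b.B s, b.N s⟫ = 0 := fun s hs => by
    rw [b.B_def s hs]; exact cross3_inner_right _ _
  have hderα : ∀ s ∈ J, HasDerivAt αtld (b.T s - (μ * b.τ s) • b.N s) s := by
    intro s hs
    have h := (b.deriv_α s hs).add ((b.frenet_B s hs).const_smul μ)
    rw [hαtld]
    have e : b.T s - (μ * b.τ s) • b.N s = b.T s + μ • -b.τ s • b.N s := by
      simp only [smul_smul, mul_neg, neg_smul, smul_neg, sub_eq_add_neg]
    rw [e]; exact h
  intro s hs
  have hda : deriv αtld s = b.T s - (μ * b.τ s) • b.N s := (hderα s hs).deriv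
  set w : ℝ := ‖deriv αtld s‖ with hw
  have hTs : Ttld s = w⁻¹ • (b.T s - (μ * b.τ s) • b.N s) := by
    rw [hTtld]; simp only [hda, hw]
  have hcos : Real.cos (θ s) = w⁻¹ := by
    have h := congrArg (fun v => ⟪v, b.T s⟫) ((hθ s hs).symm.trans hTs)
    simpa [inner_add_left, inner_sub_left, inner_smul_left, hTT s hs, hNT s hs,
      (norm_ne_zero_iff.mp (by rw [b.unit_T s hs]; norm_num) : b.T s ≠ 0)] using h
  have hsin : Real.sin (θ s) = -(μ * b.τ s) * w⁻¹ := by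
    have h := congrArg (fun v => ⟪v, b.N s⟫) ((hθ s hs).symm.trans hTs)
    simp only [inner_add_left, inner_sub_left, inner_smul_left, hNN s hs, hTN s hs,
      RCLike.ofReal_real_eq_id, id_eq, conj_trivial, mul_one, mul_zero, zero_sub,
      sub_zero, add_zero, zero_add] at h
    rw [h]; ring
  have hsincos : Real.sin (θ s) = -(μ * b.τ s) * Real.cos (θ s) := by
    rw [hsin, hcos]
  have hcosne : Real.cos (θ s) ≠ 0 := by
    intro h0
    have h1 := Real.sin_sq_add_cos_sq (θ s)
    rw [h0, hsincos, h0] at h1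
    norm_num at h1
  refine ⟨?_, ?_⟩
  · -- deriv θ s = -κ
    have hθd : HasDerivAt θ (deriv θ s) s :=
      (((hθsm s hs).contDiffAt (hJ.mem_nhds hs)).differentiableAt (by simp)).hasDerivAt
    have hD : HasDerivAt (fun t => Real.cos (θ t) • b.T t + Real.sin (θ t) • b.N t)
        ((Real.cos (θ s) • (b.κ s • b.N s) + (-Real.sin (θ s) * deriv θ s) • b.T s) +
         (Real.sin (θ s) • (-(b.κ s) • b.T s + b.τ s • b.B s) +
          (Real.cos (θ s) * deriv θ s) • b.N s)) s :=
      (hθd.cos.smul (b.frenet_T s hs)).add (hθd.sin.smul (b.frenet_N s hs))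
    have hTd : HasDerivAt Ttld
        ((Real.cos (θ s) • (b.κ s • b.N s) + (-Real.sin (θ s) * deriv θ s) • b.T s) +
         (Real.sin (θ s) • (-(b.κ s) • b.T s + b.τ s • b.B s) +
          (Real.cos (θ s) * deriv θ s) • b.N s)) s :=
      hD.congr_of_eventuallyEq (Filter.eventuallyEq_of_mem (hJ.mem_nhds hs) (fun t ht => hθ t ht))
    obtain ⟨c, hc⟩ := hpar s hs
    rw [hTd.deriv] at hc
    have h := congrArg (fun v => ⟪v, b.N s⟫) hc
    simp only [inner_add_left, inner_smul_left, inner_smul_right, hNN s hs, hTN s hs,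
      hBN s hs, RCLike.ofReal_real_eq_id, id_eq, conj_trivial, mul_one, mul_zero,
      add_zero, zero_add] at h
    have h2 : Real.cos (θ s) * (b.κ s + deriv θ s) = 0 := by linarith [h]
    rcases mul_eq_zero.mp h2 with h3 | h3
    · exact absurd h3 hcosne
    · linarith
  · -- tan θ s = -(μ τ)
    rw [Real.tan_eq_sin_div_cos, hsincos, mul_div_assoc, div_self hcosne, mul_one]
end
end
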